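/- arXiv:2203.09340 — 8 statements merged into one kernel-verified Lean document; each statement's English description precedes it below -/
import Mathlib

section
/- Let a = ⟨λ₁,…,λ_k⟩ be as above with Λ = Σ_{i=1}^k λ_i. Define Λ_j = Σ_{i=1}^j λ_i (with Λ_0 = 0) and, for 0 ≤ ℓ < Λ, let μ_ℓ be the minimum index j with Λ_j > ℓ. Call a finite sequence of digits d_M, d_{M-1}, …, d_0 a-valid if every digit satisfies 0 ≤ d_i < Λ, d_M ≠ 0, and whenever d_i = ℓ with i < M, the digits d_{i+1}, …, d_{i+μ_ℓ-1} are all 0. Then for every integer t ≥ 1, the number of a-valid sequences with at most t digits equals a_t − 1. -/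
/-- `Λ_j = λ₁ + ⋯ + λ_j`. -/
def Lam (lam : ℕ → ℕ) (j : ℕ) : ℕ := ∑ i ∈ Finset.Icc 1 j, lam i

/-- `μ_ℓ` is the minimum index `j` with `Λ_j > ℓ`. -/
noncomputable def mu (lam : ℕ → ℕ) (ℓ : ℕ) : ℕ := sInf {j : ℕ | ℓ < Lam lam j}

/-- An `a`-valid digit sequence, recorded as a list `[d_0, d_1, …, d_M]`
(least significant digit first): all digits are `< Λ`, the leading digit
`d_M` is nonzero, and every digit `ℓ` at position `i < M` is preceded
(at positions `i+1, …, i+μ_ℓ-1`) by zeroes. -/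
def AValid (lam : ℕ → ℕ) (k : ℕ) (l : List ℕ) : Prop :=
  l ≠ [] ∧ (∀ x ∈ l, x < Lam lam k) ∧ l.getLast? ≠ some 0 ∧
  ∀ i j : ℕ, i < j → j < i + mu lam (l.getD i 0) → j < l.length → l.getD j 0 = 0

/-!
Call a digit string *padded valid* if it satisfies every condition of `a`-validity except those
on the leading digit. Since `λ₁ > 0` we have `μ₀ = 1`, so zeros impose no constraint. Splitting
off the least significant digit `ℓ`, which forces the next `μ_ℓ - 1` digits to vanish, shows that
the number `N_t` of padded valid strings of length `t` satisfies
`N_t = ∑_{ℓ < Λ} N_{t - μ_ℓ} = ∑_j λ_j N_{t - j}`, because `μ_ℓ = j` for exactly `λ_j` digits `ℓ`;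
with `N_0 = 1` this gives `N_t = a_t`. Padding an `a`-valid string with leading zeros up to
length `t` is a bijection onto the padded valid strings of length `t` other than `0 ⋯ 0`.
-/

section LamMu
variable {lam : ℕ → ℕ} {k : ℕ}

lemma Lam_zero : Lam lam 0 = 0 := by simp [Lam]

lemma Lam_succ (j : ℕ) : Lam lam (j + 1) = Lam lam j + lam (j + 1) :=
  Finset.sum_Icc_succ_top (by omega) lam

lemma Lam_mono : Monotone (Lam lam) := fun _ _ h =>
  Finset.sum_le_sum_of_subset (Finset.Icc_subset_Icc_right h)

lemma mu_eq_succ {ℓ j : ℕ} (hle : Lam lam j ≤ ℓ) (hlt : ℓ < Lam lam (j + 1)) :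
    mu lam ℓ = j + 1 :=
  (Nat.sInf_upward_closed_eq_succ_iff (fun _ _ h hm => hm.trans_le (Lam_mono h)) j).2
    ⟨hlt, hle.not_gt⟩

lemma mu_zero (h1 : 1 ≤ lam 1) : mu lam 0 = 1 :=
  mu_eq_succ (j := 0) (by simp [Lam_zero]) (by simp [Lam_succ, Lam_zero]; omega)

lemma mu_pos {ℓ : ℕ} (hℓ : ℓ < Lam lam k) : 0 < mu lam ℓ := by
  have hmem : ℓ < Lam lam (mu lam ℓ) := Nat.sInf_mem (s := {j | ℓ < Lam lam j}) ⟨k, hℓ⟩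
  refine Nat.pos_of_ne_zero fun h => ?_
  rw [h, Lam_zero] at hmem
  omega

lemma sum_range_Lam_comp_mu {M : Type*} [AddCommMonoid M] (f : ℕ → M) (k : ℕ) :
    ∑ ℓ ∈ Finset.range (Lam lam k), f (mu lam ℓ) = ∑ j ∈ Finset.Icc 1 k, lam j • f j := by
  induction k with
  | zero => simp [Lam_zero]
  | succ k ih =>
    have hblock : ∀ x ∈ Finset.range (lam (k + 1)), f (mu lam (Lam lam k + x)) = f (k + 1) :=
      fun x hx => by
        rw [mu_eq_succ (j := k) (by omega) (by rw [Lam_succ]; simp at hx; omega)]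
    rw [Lam_succ, Finset.sum_range_add, ih, Finset.sum_Icc_succ_top (by omega),
      Finset.sum_congr rfl hblock, Finset.sum_const, Finset.card_range]

end LamMu

/-- `AValid` without the conditions on the leading digit, which sits at the end of the list.
Positions past the end read as `0`, so `AValid`'s bound `j < l.length` can be dropped. -/
def PaddedValid (lam : ℕ → ℕ) (k : ℕ) (l : List ℕ) : Prop :=
  (∀ x ∈ l, x < Lam lam k) ∧
  ∀ i j : ℕ, i < j → j < i + mu lam (l.getD i 0) → l.getD j 0 = 0

def paddedValidOfLength (lam : ℕ → ℕ) (k t : ℕ) : Set (List ℕ) :=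
  {l | PaddedValid lam k l ∧ l.length = t}

section PaddedValid
variable {lam : ℕ → ℕ} {k : ℕ}

lemma aValid_iff {l : List ℕ} :
    AValid lam k l ↔ l ≠ [] ∧ l.getLast? ≠ some 0 ∧ PaddedValid lam k l := by
  refine ⟨fun ⟨hne, hdig, hlast, hzero⟩ => ⟨hne, hlast, hdig, fun i j hij hj => ?_⟩,
    fun ⟨hne, hlast, hdig, hzero⟩ => ⟨hne, hdig, hlast, fun i j hij hj _ => hzero i j hij hj⟩⟩
  by_cases hjl : j < l.length
  · exact hzero i j hij hj hjl
  · exact List.getD_eq_default _ _ (not_lt.1 hjl)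

lemma paddedValid_nil : PaddedValid lam k [] :=
  ⟨by simp, fun _ _ _ _ => List.getD_nil⟩

lemma paddedValid_cons {ℓ : ℕ} {l : List ℕ} :
    PaddedValid lam k (ℓ :: l) ↔
      ℓ < Lam lam k ∧ (∀ j < mu lam ℓ - 1, l.getD j 0 = 0) ∧ PaddedValid lam k l := by
  simp only [PaddedValid, List.forall_mem_cons]
  constructor
  · rintro ⟨⟨hℓ, hdig⟩, hzero⟩
    refine ⟨hℓ, fun j hj => ?_, hdig, fun i j hij hj => ?_⟩
    · simpa using hzero 0 (j + 1) (by omega) (by simp; omega)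
    · simpa using hzero (i + 1) (j + 1) (by omega) (by rw [List.getD_cons_succ]; omega)
  · rintro ⟨hℓ, hhead, hdig, hzero⟩
    refine ⟨⟨hℓ, hdig⟩, fun i j hij hj => ?_⟩
    obtain ⟨j, rfl⟩ : ∃ j', j = j' + 1 := ⟨j - 1, by omega⟩
    rcases i with _ | i
    · simpa using hhead j (by simp at hj; omega)
    · simpa using hzero i j (by omega) (by rw [List.getD_cons_succ] at hj; omega)

lemma paddedValid_replicate_zero_append (h1 : 1 ≤ lam 1) (hΛ : 0 < Lam lam k) (m : ℕ)
    {l : List ℕ} : PaddedValid lam k (List.replicate m 0 ++ l) ↔ PaddedValid lam k l := by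
  induction m with
  | zero => rfl
  | succ m ih => simp [List.replicate_succ, paddedValid_cons, mu_zero h1, hΛ, ih]

lemma PaddedValid.of_prefix {l₁ l₂ : List ℕ} (h : PaddedValid lam k l₂) (hp : l₁ <+: l₂) :
    PaddedValid lam k l₁ := by
  obtain ⟨r, rfl⟩ := hp
  refine ⟨fun x hx => h.1 x (List.mem_append_left r hx), fun i j hij hj => ?_⟩
  by_cases hjl : j < l₁.length
  · rw [← List.getD_append _ r _ _ hjl]
    rw [← List.getD_append _ r _ _ (by omega)] at hj
    exact h.2 i j hij hj
  · exact List.getD_eq_default _ _ (not_lt.1 hjl)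

lemma paddedValid_append_replicate_zero (hΛ : 0 < Lam lam k) (m : ℕ) {l : List ℕ} :
    PaddedValid lam k (l ++ List.replicate m 0) ↔ PaddedValid lam k l := by
  have hgetD : ∀ j, (l ++ List.replicate m 0).getD j 0 = l.getD j 0 := fun j => by
    by_cases hjl : j < l.length
    · exact List.getD_append _ _ _ _ hjl
    · rw [List.getD_append_right _ _ _ _ (by omega), List.getD_eq_default l 0 (by omega)]
      by_cases hjm : j - l.length < m
      · exact List.getD_replicate _ hjm
      · exact List.getD_eq_default _ _ (by simp; omega)
  refine ⟨fun h => h.of_prefix (List.prefix_append l _), fun ⟨hdig, hzero⟩ => ⟨?_, ?_⟩⟩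
  · simp only [List.mem_append, List.mem_replicate]
    rintro x (hx | ⟨-, rfl⟩)
    exacts [hdig x hx, hΛ]
  · simpa only [hgetD] using hzero

lemma paddedValidOfLength_finite (t : ℕ) : (paddedValidOfLength lam k t).Finite := by
  refine ((List.finite_length_eq {x : ℕ // x < Lam lam k} t).image
    (List.map Subtype.val)).subset fun l ⟨⟨hdig, _⟩, hlen⟩ => ?_
  lift l to List {x : ℕ // x < Lam lam k} using hdig
  exact ⟨l, by simpa using hlen, rfl⟩

end PaddedValid

section Count
variable {lam : ℕ → ℕ} {k : ℕ}

lemma paddedValidOfLength_zero : paddedValidOfLength lam k 0 = {[]} := by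
  ext l
  simp only [paddedValidOfLength, List.length_eq_zero_iff, Set.mem_ofPred_eq,
    Set.mem_singleton_iff, and_iff_right_iff_imp]
  rintro rfl
  exact paddedValid_nil

lemma paddedValidOfLength_succ (t : ℕ) :
    paddedValidOfLength lam k (t + 1) = ⋃ ℓ ∈ Set.Iio (Lam lam k),
      List.cons ℓ '' {l ∈ paddedValidOfLength lam k t | ∀ j < mu lam ℓ - 1, l.getD j 0 = 0} := by
  ext l
  rcases l with _ | ⟨ℓ, l⟩
  · simp [paddedValidOfLength]
  · simp [paddedValidOfLength, paddedValid_cons, and_assoc, and_left_comm, and_comm]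

lemma paddedValidOfLength_sep_getD_eq_zero (h1 : 1 ≤ lam 1) (hΛ : 0 < Lam lam k) (m t : ℕ) :
    {l ∈ paddedValidOfLength lam k t | ∀ j < m, l.getD j 0 = 0} =
      (List.replicate (min m t) 0 ++ ·) '' paddedValidOfLength lam k (t - m) := by
  ext l
  constructor
  · rintro ⟨⟨hP, hlen⟩, hzero⟩
    have htake : l.take (min m t) = List.replicate (min m t) 0 := by
      refine List.eq_replicate_iff.2 ⟨by simp; omega, fun b hb => ?_⟩
      obtain ⟨i, hi, rfl⟩ := List.getElem_of_mem hb
      rw [List.getElem_take, ← List.getD_eq_getElem _ 0]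
      exact hzero i (by simp at hi; omega)
    refine ⟨l.drop (min m t), ⟨?_, by simp; omega⟩,
      by rw [← htake]; exact List.take_append_drop _ _⟩
    rwa [← paddedValid_replicate_zero_append h1 hΛ (min m t), ← htake, List.take_append_drop]
  · rintro ⟨r, ⟨hP, hlen⟩, rfl⟩
    refine ⟨⟨(paddedValid_replicate_zero_append h1 hΛ _).2 hP, by simp; omega⟩, fun j hj => ?_⟩
    by_cases hjt : j < min m t
    · rw [List.getD_append _ _ _ _ (by simpa using hjt), List.getD_replicate _ hjt]
    · exact List.getD_eq_default _ _ (by simp; omega)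

lemma ncard_paddedValidOfLength_succ (h1 : 1 ≤ lam 1) (hΛ : 0 < Lam lam k) (t : ℕ) :
    (paddedValidOfLength lam k (t + 1)).ncard =
      ∑ ℓ ∈ Finset.range (Lam lam k), (paddedValidOfLength lam k (t + 1 - mu lam ℓ)).ncard := by
  have hdisj : (Set.Iio (Lam lam k)).PairwiseDisjoint fun ℓ => List.cons ℓ ''
      {l ∈ paddedValidOfLength lam k t | ∀ j < mu lam ℓ - 1, l.getD j 0 = 0} := by
    intro i _ j _ hij
    refine Set.disjoint_left.2 ?_
    rintro _ ⟨l₁, -, rfl⟩ ⟨l₂, -, h⟩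
    exact hij (List.cons_eq_cons.1 h).1.symm
  rw [paddedValidOfLength_succ, ← Finset.coe_range,
    Set.Finite.ncard_biUnion (Finset.finite_toSet _)
      (fun ℓ _ => ((paddedValidOfLength_finite t).sep _).image _) (by simpa using hdisj),
    finsum_mem_coe_finset]
  refine Finset.sum_congr rfl fun ℓ hℓ => ?_
  rw [List.cons_injective.injOn.ncard_image, paddedValidOfLength_sep_getD_eq_zero h1 hΛ,
    (List.append_right_injective _).injOn.ncard_image]
  have := mu_pos (Finset.mem_range.1 hℓ)
  congr 2
  omega

lemma ncard_paddedValidOfLength (h1 : 1 ≤ lam 1) (hΛ : 0 < Lam lam k)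
    (a : ℤ → ℤ) (ha0 : ∀ i : ℤ, i ≤ 0 → a i = 1)
    (harec : ∀ n : ℤ, 1 ≤ n → a n = ∑ i ∈ Finset.Icc 1 k, (lam i : ℤ) * a (n - i)) (t : ℕ) :
    ((paddedValidOfLength lam k t).ncard : ℤ) = a t := by
  induction t using Nat.strong_induction_on with
  | _ t ih =>
  rcases t with _ | t
  · simp [paddedValidOfLength_zero, ha0]
  · rw [ncard_paddedValidOfLength_succ h1 hΛ, Nat.cast_sum,
      sum_range_Lam_comp_mu (fun j => ((paddedValidOfLength lam k (t + 1 - j)).ncard : ℤ)),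
      harec _ (by omega)]
    refine Finset.sum_congr rfl fun j hj => ?_
    rw [nsmul_eq_mul, ih _ (by simp at hj; omega)]
    rcases le_or_gt j (t + 1) with hjt | hjt
    · push_cast [hjt]
      rfl
    · rw [ha0 _ (by omega), ha0 _ (by omega)]

end Count

section Strip
variable {α : Type*} [DecidableEq α]

lemma List.rdropWhile_append_replicate_length_sub (a : α) (l : List α) :
    l.rdropWhile (· == a) ++ List.replicate (l.length - (l.rdropWhile (· == a)).length) a = l := by
  have hsplit := List.rdropWhile_append_rtakeWhile (p := (· == a)) (l := l)
  conv_rhs => rw [← hsplit]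
  congr 1
  refine (List.eq_replicate_iff.2 ⟨?_, fun b hb => by simpa using List.mem_rtakeWhile_imp hb⟩).symm
  have := congrArg List.length hsplit
  simp only [List.length_append] at this
  omega

lemma List.rdropWhile_append_replicate {a : α} {l : List α} (h : l.getLast? ≠ some a) (m : ℕ) :
    (l ++ List.replicate m a).rdropWhile (· == a) = l := by
  induction m with
  | zero =>
    rw [List.replicate_zero, List.append_nil, List.rdropWhile_eq_self_iff]
    intro hl
    rw [List.getLast?_eq_some_getLast hl] at h
    simpa using h
  | succ m ih =>
    rw [List.replicate_succ', ← List.append_assoc, List.rdropWhile_concat_pos _ _ _ (by simp), ih]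

lemma List.getLast?_rdropWhile_ne (a : α) (l : List α) :
    (l.rdropWhile (· == a)).getLast? ≠ some a := by
  by_cases hne : l.rdropWhile (· == a) = []
  · simp [hne]
  · rw [List.getLast?_eq_some_getLast hne]
    simpa using List.rdropWhile_last_not _ _ hne

end Strip

lemma ncard_setOf_aValid_length_le_add_one {lam : ℕ → ℕ} {k : ℕ} (hΛ : 0 < Lam lam k) (t : ℕ) :
    {l | AValid lam k l ∧ l.length ≤ t}.ncard + 1 = (paddedValidOfLength lam k t).ncard := by
  set S := {l : List ℕ | PaddedValid lam k l ∧ l.getLast? ≠ some 0 ∧ l.length ≤ t}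
  have hS : {l | AValid lam k l ∧ l.length ≤ t} = S \ {[]} := by
    ext l
    simp only [S, aValid_iff, Set.mem_sdiff, Set.mem_ofPred_eq, Set.mem_singleton_iff]
    tauto
  have hbij : Set.BijOn (fun l => l ++ List.replicate (t - l.length) 0) S
      (paddedValidOfLength lam k t) := by
    refine Set.InvOn.bijOn (f' := fun l => l.rdropWhile (· == 0)) ⟨?_, ?_⟩ ?_ ?_
    · exact fun l hl => List.rdropWhile_append_replicate hl.2.1 _
    · rintro l ⟨-, rfl⟩
      exact List.rdropWhile_append_replicate_length_sub 0 l
    · rintro l ⟨hP, -, hlen⟩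
      exact ⟨(paddedValid_append_replicate_zero hΛ _).2 hP, by simp; omega⟩
    · rintro l ⟨hP, hlen⟩
      have hpre := List.rdropWhile_prefix (p := (· == 0)) (l := l)
      exact ⟨hP.of_prefix hpre, List.getLast?_rdropWhile_ne 0 l, hpre.length_le.trans hlen.le⟩
  have hfin : S.Finite :=
    Set.Finite.of_finite_image (hbij.image_eq ▸ paddedValidOfLength_finite t) hbij.injOn
  have hnil : [] ∈ S := ⟨paddedValid_nil, by simp, by simp⟩
  rw [hS, Set.ncard_sdiff_singleton_add_one hnil hfin, hbij.ncard_eq]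

theorem stmt1_general (k : ℕ) (lam : ℕ → ℕ)
    (h1 : 1 ≤ lam 1)
    (hΛ : 2 ≤ Lam lam k)
    (a : ℤ → ℤ)
    (ha0 : ∀ i : ℤ, i ≤ 0 → a i = 1)
    (harec : ∀ n : ℤ, 1 ≤ n → a n = ∑ i ∈ Finset.Icc 1 k, (lam i : ℤ) * a (n - i)) :
    ∀ t : ℕ, 1 ≤ t →
      (Set.ncard {l : List ℕ | AValid lam k l ∧ l.length ≤ t} : ℤ) = a t - 1 := by
  intro t _
  have hΛ₀ : 0 < Lam lam k := by omega
  rw [← ncard_paddedValidOfLength h1 hΛ₀ a ha0 harec t,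
    ← ncard_setOf_aValid_length_le_add_one hΛ₀ t]
  push_cast
  ring

/-- the number of `a`-valid sequences with at most `t` digits
is `a_t - 1`. -/
theorem stmt1 (k : ℕ) (lam : ℕ → ℕ) (hk : 1 ≤ k)
    (h1 : 1 ≤ lam 1) (hkpos : 1 ≤ lam k) (hzero : ∀ i, k < i → lam i = 0)
    (hΛ : 2 ≤ Lam lam k)
    (a : ℤ → ℤ)
    (ha0 : ∀ i : ℤ, i ≤ 0 → a i = 1)
    (harec : ∀ n : ℤ, 1 ≤ n → a n = ∑ i ∈ Finset.Icc 1 k, (lam i : ℤ) * a (n - i)) :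
    ∀ t : ℕ, 1 ≤ t →
      (Set.ncard {l : List ℕ | AValid lam k l ∧ l.length ≤ t} : ℤ) = a t - 1 :=
  stmt1_general k lam h1 hΛ a ha0 harec
end

section
/- Let k ≥ 2 and consider the recurrence a_n = a_{n-1} + a_{n-k} with a_i = 1 for i ≤ 0. For every positive integer N there exists a unique representation N = Σ_{i∈S} a_i where S is a finite set of nonnegative integers such that any two distinct elements of S differ by at least k. -/
/-!
Since `a` is increasing and `a (M + 1) = a M + a (M + 1 - k)`, induction on a `k`-separated set,
peeling off its largest index `M` (all other indices are at most `M - k`), shows that its sum `N`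
satisfies `a M ≤ N < a (M + 1)`. Hence the largest index of a representation of `N` is determined
by `N`, which gives uniqueness; choosing that index greedily leaves a remainder
`N - a M < a (M + 1 - k)`, whose representation only uses indices at most `M - k`, giving existence.
-/

open Finset

theorem Monotone.eq_of_le_of_lt_succ {α : Type*} [Preorder α] {f : ℕ → α} (hf : Monotone f)
    {m n : ℕ} {x : α} (hm : f m ≤ x) (hm' : x < f (m + 1)) (hn : f n ≤ x) (hn' : x < f (n + 1)) :
    m = n := by
  by_contra hmn
  rcases Nat.lt_or_gt_of_ne hmn with hlt | hlt
  · exact (hm'.trans_le ((hf hlt).trans hn)).false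
  · exact (hn'.trans_le ((hf hlt).trans hm)).false

theorem natCast_le_abs_sub_iff {k i j : ℕ} (hij : i ≤ j) :
    (k : ℤ) ≤ |(i : ℤ) - j| ↔ i + k ≤ j := by
  rw [abs_sub_comm, abs_of_nonneg (by omega)]
  omega

structure IsDelayedFibonacci (k : ℕ) (a : ℤ → ℤ) : Prop where
  eq_one_of_nonpos : ∀ i : ℤ, i ≤ 0 → a i = 1
  eq_add : ∀ n : ℤ, 1 ≤ n → a n = a (n - 1) + a (n - k)

namespace IsDelayedFibonacci

variable {k : ℕ} {a : ℤ → ℤ}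

theorem one_le (h : IsDelayedFibonacci k a) (hk : 0 < k) (n : ℤ) : 1 ≤ a n := by
  suffices ∀ m : ℕ, ∀ n : ℤ, n ≤ m → 1 ≤ a n from this n.toNat n (Int.self_le_toNat n)
  intro m
  induction m with
  | zero => intro n hn; rw [h.eq_one_of_nonpos n hn]
  | succ m ih =>
    intro n hn
    rcases le_or_gt n 0 with hn0 | hn0
    · rw [h.eq_one_of_nonpos n hn0]
    · have := ih (n - 1) (by omega)
      have := ih (n - k) (by omega)
      rw [h.eq_add n hn0]
      omega

theorem lt_add_one (h : IsDelayedFibonacci k a) (hk : 0 < k) {n : ℤ} (hn : 0 ≤ n) :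
    a n < a (n + 1) := by
  have := h.one_le hk (n + 1 - k)
  rw [h.eq_add (n + 1) (by omega), add_sub_cancel_right]
  omega

theorem monotone (h : IsDelayedFibonacci k a) (hk : 0 < k) : Monotone a := by
  refine monotone_int_of_le_succ fun n => ?_
  rcases lt_or_ge n 0 with hn | hn
  · rw [h.eq_one_of_nonpos n hn.le, h.eq_one_of_nonpos (n + 1) hn]
  · exact (h.lt_add_one hk hn).le

theorem natCast_lt (h : IsDelayedFibonacci k a) (hk : 0 < k) (n : ℕ) : (n : ℤ) < a n := by
  induction n with
  | zero => simpa using zero_lt_one.trans_le (h.one_le hk 0)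
  | succ n ih =>
    have := h.lt_add_one hk n.cast_nonneg
    push_cast
    omega

theorem sum_lt (h : IsDelayedFibonacci k a) (hk : 0 < k) {S : Finset ℕ}
    (hS : (S : Set ℕ).Pairwise fun i j => (k : ℤ) ≤ |(i : ℤ) - j|) {m : ℤ}
    (hm : ∀ i ∈ S, (i : ℤ) ≤ m) : ∑ i ∈ S, a i < a (m + 1) := by
  induction S using Finset.induction_on_max generalizing m with
  | empty => simpa using zero_lt_one.trans_le (h.one_le hk (m + 1))
  | insert M s hlt ih =>
    rw [coe_insert, Set.pairwise_insert] at hS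
    have hgap : ∀ i ∈ s, i + k ≤ M := fun i hi =>
      (natCast_le_abs_sub_iff (hlt i hi).le).1 (hS.2 i hi (hlt i hi).ne').2
    have hs := ih hS.1 (m := M - k) fun i hi => by have := hgap i hi; omega
    have hM : a (M + 1) ≤ a (m + 1) := h.monotone hk (by simpa using hm M (mem_insert_self M s))
    rw [sum_insert fun hM => (hlt M hM).false]
    rw [h.eq_add (M + 1) (by omega), add_sub_cancel_right] at hM
    rw [sub_add_eq_add_sub] at hs
    omega

theorem exists_sum_eq (h : IsDelayedFibonacci k a) (hk : 0 < k) (m : ℕ) {N : ℤ} (hN : 0 ≤ N)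
    (hNm : N < a m) : ∃ S : Finset ℕ, ((S : Set ℕ).Pairwise fun i j => (k : ℤ) ≤ |(i : ℤ) - j|) ∧
      N = ∑ i ∈ S, a i ∧ ∀ i ∈ S, i < m := by
  induction m using Nat.strong_induction_on generalizing N with
  | _ m ih =>
    rcases m with _ | j
    · have : N = 0 := by have := h.eq_one_of_nonpos 0 le_rfl; push_cast at hNm; omega
      exact ⟨∅, by simp, by simp [this], by simp⟩
    rcases lt_or_ge N (a j) with hNj | hNj
    · obtain ⟨S, hS, hsum, hlt⟩ := ih j (Nat.lt_succ_self j) hN hNj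
      exact ⟨S, hS, hsum, fun i hi => (hlt i hi).trans (Nat.lt_succ_self j)⟩
    -- greedy step: take `j`; the remainder `N - a j` is below `a (j + 1 - k)`
    have hlag : a ((j + 1 - k : ℕ) : ℤ) = a (j + 1 - k) := by
      rcases le_or_gt k (j + 1) with hkj | hkj
      · push_cast [hkj]; rfl
      · rw [Nat.sub_eq_zero_of_le hkj.le, Nat.cast_zero, h.eq_one_of_nonpos 0 le_rfl,
          h.eq_one_of_nonpos _ (by omega)]
    have hrem : N - a j < a ((j + 1 - k : ℕ) : ℤ) := by
      have hrec := h.eq_add (j + 1) (by omega)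
      rw [add_sub_cancel_right] at hrec
      push_cast at hNm
      rw [hlag]
      linarith
    obtain ⟨T, hT, hsum, hlt⟩ := ih (j + 1 - k) (by omega) (sub_nonneg.2 hNj) hrem
    have hgap : ∀ i ∈ T, i + k ≤ j := fun i hi => by have := hlt i hi; omega
    have hjT : j ∉ T := fun hj => by have := hgap j hj; omega
    refine ⟨insert j T, ?_, ?_, ?_⟩
    · rw [coe_insert]
      refine hT.insert fun i hi _ => ?_
      have hij := (natCast_le_abs_sub_iff (k := k) (by have := hgap i hi; omega)).2 (hgap i hi)
      exact ⟨by rwa [abs_sub_comm], hij⟩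
    · rw [sum_insert hjT, ← hsum]
      ring
    · intro i hi
      rcases mem_insert.1 hi with rfl | hi
      · exact Nat.lt_succ_self i
      · have := hgap i hi; omega

theorem le_sum_of_mem (h : IsDelayedFibonacci k a) (hk : 0 < k) {S : Finset ℕ} {M : ℕ}
    (hM : M ∈ S) : a M ≤ ∑ i ∈ S, a i :=
  single_le_sum (f := fun i : ℕ => a i) (fun i _ => zero_le_one.trans (h.one_le hk i)) hM

theorem eq_of_sum_eq (h : IsDelayedFibonacci k a) (hk : 0 < k) {S T : Finset ℕ}
    (hS : (S : Set ℕ).Pairwise fun i j => (k : ℤ) ≤ |(i : ℤ) - j|)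
    (hT : (T : Set ℕ).Pairwise fun i j => (k : ℤ) ≤ |(i : ℤ) - j|)
    (hST : ∑ i ∈ S, a i = ∑ i ∈ T, a i) : S = T := by
  induction S using Finset.induction_on_max generalizing T with
  | empty =>
    refine (eq_empty_of_forall_notMem fun i hi => ?_).symm
    have := h.le_sum_of_mem hk hi
    have := h.one_le hk i
    simp only [sum_empty] at hST
    omega
  | insert M s hlt ih =>
    have hMS : M ∈ insert M s := mem_insert_self M s
    have hT0 : T.Nonempty := by
      rw [nonempty_iff_ne_empty]
      rintro rfl
      have := h.le_sum_of_mem hk hMS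
      have := h.one_le hk M
      simp only [sum_empty] at hST
      omega
    -- both largest indices are the unique `M` with `a M ≤ N < a (M + 1)`
    have hmax : M = T.max' hT0 := by
      refine ((h.monotone hk).comp Nat.mono_cast).eq_of_le_of_lt_succ
        (x := ∑ i ∈ T, a i) (hST ▸ h.le_sum_of_mem hk hMS) ?_
        (h.le_sum_of_mem hk (T.max'_mem hT0)) ?_
      · rw [Function.comp_apply, Nat.cast_succ, ← hST]
        refine h.sum_lt hk hS fun i hi => ?_
        rcases mem_insert.1 hi with rfl | hi
        exacts [le_rfl, by exact_mod_cast (hlt i hi).le]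
      · rw [Function.comp_apply, Nat.cast_succ]
        exact h.sum_lt hk hT fun i hi => by exact_mod_cast T.le_max' i hi
    have hMT : M ∈ T := hmax ▸ T.max'_mem hT0
    rw [← insert_erase hMT]
    congr 1
    refine ih (hS.mono (by simp)) (hT.mono (by simp)) ?_
    rw [sum_insert fun hM => (hlt M hM).false, ← add_sum_erase T _ hMT] at hST
    exact add_left_cancel hST

end IsDelayedFibonacci

/-- for the recurrence `a_n = a_{n-1} + a_{n-k}` (with `k ≥ 2`
and `a_i = 1` for `i ≤ 0`), every positive integer `N` has a unique
representation `N = ∑_{i ∈ S} a_i` with `S` a finite set of nonnegative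
integers any two distinct elements of which differ by at least `k`. -/
theorem stmt4 (k : ℕ) (hk : 2 ≤ k) (a : ℤ → ℤ)
    (ha0 : ∀ i : ℤ, i ≤ 0 → a i = 1)
    (harec : ∀ n : ℤ, 1 ≤ n → a n = a (n - 1) + a (n - k)) :
    ∀ N : ℕ, 1 ≤ N → ∃! S : Finset ℕ,
      (N : ℤ) = ∑ i ∈ S, a i ∧
      ∀ i ∈ S, ∀ j ∈ S, i ≠ j → (k : ℤ) ≤ |(i : ℤ) - (j : ℤ)| := by
  intro N _
  have h : IsDelayedFibonacci k a := ⟨ha0, harec⟩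
  have hk₀ : 0 < k := by omega
  obtain ⟨S, hS, hsum, -⟩ := h.exists_sum_eq hk₀ N N.cast_nonneg (h.natCast_lt hk₀ N)
  refine ⟨S, ⟨hsum, fun i hi j hj => hS hi hj⟩, fun T ⟨hTsum, hT⟩ => ?_⟩
  exact h.eq_of_sum_eq hk₀ (fun i hi j hj => hT i hi j hj) hS (hTsum.symm.trans hsum)
end

section
/- Let k ≥ 1, let λ₁,…,λ_k be nonnegative integers with λ₁ > 0 and λ_k > 0, and let p(x) = x^k − Σ_{i=1}^k λ_i x^{k-i}. Then p has a unique positive real root κ (counted with multiplicity), and every other complex root of p has modulus strictly less than κ. -/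
/-!
Substituting `y = x⁻¹` turns `x ^ k = ∑ λᵢ x ^ (k - i)` into `Q y = 1` with
`Q y = ∑ λᵢ y ^ i`, which is strictly increasing on `[0, ∞)` and vanishes at `0`; so it has a
unique positive solution `y₀`, and `κ = y₀⁻¹`. For a complex root `z` and `w = z⁻¹`,
`1 = Re (Q w) ≤ Q ‖w‖` forces `‖w‖ ≥ y₀`; in the case of equality every term satisfies
`Re (w ^ i) = ‖w‖ ^ i`, and the term `i = 1` (where `λ₁ > 0`) makes `w` a nonnegative real.
Simplicity follows from `κ p'(κ) = ∑ i λᵢ κ ^ (k - i) > 0`.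
-/

open Finset Polynomial

theorem pow_eq_sum_mul_pow_sub_iff {K : Type*} [Field K] (k : ℕ) (c : ℕ → K) {x : K}
    (hx : x ≠ 0) :
    x ^ k = ∑ i ∈ Icc 1 k, c i * x ^ (k - i) ↔ ∑ i ∈ Icc 1 k, c i * x⁻¹ ^ i = 1 := by
  have hsum : ∑ i ∈ Icc 1 k, c i * x ^ (k - i) = x ^ k * ∑ i ∈ Icc 1 k, c i * x⁻¹ ^ i := by
    rw [mul_sum]
    refine sum_congr rfl fun i hi => ?_
    rw [← pow_sub_mul_pow x (mem_Icc.mp hi).2, inv_pow]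
    field_simp
  rw [hsum, eq_comm, mul_eq_left₀ (pow_ne_zero k hx)]

theorem Complex.eq_norm_of_re_eq_norm {w : ℂ} (h : w.re = ‖w‖) : w = ‖w‖ := by
  nth_rewrite 1 [Complex.eq_re_of_ofReal_le (Complex.re_eq_norm.mp h), h]
  rfl

theorem Polynomial.rootMultiplicity_eq_one_of_isRoot_of_not_isRoot_derivative {R : Type*}
    [CommRing R] [IsDomain R] {p : R[X]} {t : R} (hp : p.IsRoot t)
    (hd : ¬(derivative p).IsRoot t) : p.rootMultiplicity t = 1 := by
  have hp0 : p ≠ 0 := by rintro rfl; simp at hd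
  have hpos := (rootMultiplicity_pos hp0).mpr hp
  have hle := mt (one_lt_rootMultiplicity_iff_isRoot hp0).mp (fun h => hd h.2)
  omega

theorem Polynomial.mul_eval_derivative_X_pow {R : Type*} [CommSemiring R] (n : ℕ) (x : R) :
    x * (derivative (X ^ n : R[X])).eval x = n * x ^ n := by
  rw [derivative_X_pow, eval_mul, eval_C, eval_pow, eval_X]
  rcases n.eq_zero_or_pos with rfl | hn
  · simp
  · rw [mul_left_comm, mul_pow_sub_one hn.ne']

theorem mul_eval_derivative_X_pow_sub_sum {R : Type*} [CommRing R] (k : ℕ) (c : ℕ → R)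
    (x : R) :
    x * (derivative (X ^ k - ∑ i ∈ Icc 1 k, C (c i) * X ^ (k - i))).eval x =
      k * x ^ k - ∑ i ∈ Icc 1 k, c i * ((k - i : ℕ) * x ^ (k - i)) := by
  simp only [derivative_sub, derivative_sum, derivative_C_mul, eval_sub, eval_finsetSum,
    eval_mul, eval_C, mul_sub, mul_sum, mul_left_comm x, mul_eval_derivative_X_pow]

section

variable {k : ℕ} {a : ℕ → ℝ}

theorem strictMonoOn_sum_mul_pow (ha : ∀ i, 0 ≤ a i) (hk : 1 ≤ k) (h1 : 0 < a 1) :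
    StrictMonoOn (fun y : ℝ => ∑ i ∈ Icc 1 k, a i * y ^ i) (Set.Ici 0) := by
  intro x hx y _ hxy
  apply sum_lt_sum
  · exact fun i _ => mul_le_mul_of_nonneg_left (pow_le_pow_left₀ hx hxy.le i) (ha i)
  · exact ⟨1, mem_Icc.mpr ⟨le_rfl, hk⟩, by simpa using mul_lt_mul_of_pos_left hxy h1⟩

theorem exists_pos_sum_mul_pow_eq_one (ha : ∀ i, 0 ≤ a i) (hk : 1 ≤ k) (h1 : 0 < a 1) :
    ∃ y : ℝ, 0 < y ∧ ∑ i ∈ Icc 1 k, a i * y ^ i = 1 := by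
  set Q : ℝ → ℝ := fun y => ∑ i ∈ Icc 1 k, a i * y ^ i
  have hQ0 : Q 0 = 0 :=
    sum_eq_zero fun i hi => by simp [Nat.one_le_iff_ne_zero.mp (mem_Icc.mp hi).1]
  have hQ1 : 1 ≤ Q (a 1)⁻¹ := by
    calc (1 : ℝ) = a 1 * (a 1)⁻¹ ^ 1 := by field_simp
      _ ≤ Q (a 1)⁻¹ := single_le_sum (f := fun i => a i * (a 1)⁻¹ ^ i)
          (fun i _ => by have := ha i; positivity) (mem_Icc.mpr ⟨le_rfl, hk⟩)
  obtain ⟨y, hy, hQy⟩ := intermediate_value_Icc (inv_nonneg.mpr h1.le)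
    (by fun_prop : Continuous Q).continuousOn ⟨hQ0.trans_le zero_le_one, hQ1⟩
  refine ⟨y, hy.1.lt_of_ne ?_, hQy⟩
  rintro rfl
  exact zero_ne_one (hQ0.symm.trans hQy)

theorem re_sum_mul_pow_le (w : ℂ) (ha : ∀ i, 0 ≤ a i) :
    (∑ i ∈ Icc 1 k, (a i : ℂ) * w ^ i).re ≤ ∑ i ∈ Icc 1 k, a i * ‖w‖ ^ i := by
  rw [Complex.re_sum]
  refine sum_le_sum fun i _ => ?_
  rw [Complex.re_ofReal_mul, ← norm_pow]
  exact mul_le_mul_of_nonneg_left (Complex.re_le_norm _) (ha i)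

theorem eq_norm_of_re_sum_mul_pow_eq (ha : ∀ i, 0 ≤ a i) (hk : 1 ≤ k) (h1 : 0 < a 1) {w : ℂ}
    (h : (∑ i ∈ Icc 1 k, (a i : ℂ) * w ^ i).re = ∑ i ∈ Icc 1 k, a i * ‖w‖ ^ i) :
    w = ‖w‖ := by
  have hgap : ∑ i ∈ Icc 1 k, a i * (‖w‖ ^ i - (w ^ i).re) = 0 := by
    simp only [mul_sub, sum_sub_distrib, ← h, Complex.re_sum, Complex.re_ofReal_mul]
    ring
  have hterms := (sum_eq_zero_iff_of_nonneg fun i _ => mul_nonneg (ha i)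
    (sub_nonneg.mpr ((Complex.re_le_norm _).trans (norm_pow w i).le))).mp hgap
  have h1gap := hterms 1 (mem_Icc.mpr ⟨le_rfl, hk⟩)
  rw [pow_one, pow_one, mul_eq_zero, sub_eq_zero] at h1gap
  exact Complex.eq_norm_of_re_eq_norm (h1gap.resolve_left h1.ne').symm

theorem lt_norm_or_eq_of_sum_mul_pow_eq_one (ha : ∀ i, 0 ≤ a i) (hk : 1 ≤ k) (h1 : 0 < a 1)
    {y : ℝ} (hy0 : 0 ≤ y) (hy : ∑ i ∈ Icc 1 k, a i * y ^ i = 1) {w : ℂ}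
    (hw : ∑ i ∈ Icc 1 k, (a i : ℂ) * w ^ i = 1) : y < ‖w‖ ∨ w = y := by
  have hQ := strictMonoOn_sum_mul_pow ha hk h1
  have hre := re_sum_mul_pow_le w ha (k := k)
  rw [hw, Complex.one_re] at hre
  refine (lt_or_ge y ‖w‖).imp_right fun hle => ?_
  have hQw : ∑ i ∈ Icc 1 k, a i * ‖w‖ ^ i = 1 :=
    le_antisymm (hy ▸ hQ.monotoneOn (norm_nonneg w) hy0 hle) hre
  have hwy : ‖w‖ = y := hQ.injOn (norm_nonneg w) hy0 (hQw.trans hy.symm)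
  rw [eq_norm_of_re_sum_mul_pow_eq ha hk h1 (w := w) (by rw [hw, hQw, Complex.one_re]), hwy]

theorem rootMultiplicity_X_pow_sub_sum_eq_one (ha : ∀ i, 0 ≤ a i) (hk : 1 ≤ k) (h1 : 0 < a 1)
    {κ : ℝ} (hκ : 0 < κ) (hroot : κ ^ k = ∑ i ∈ Icc 1 k, a i * κ ^ (k - i)) :
    rootMultiplicity κ (X ^ k - ∑ i ∈ Icc 1 k, C (a i) * X ^ (k - i)) = 1 := by
  apply rootMultiplicity_eq_one_of_isRoot_of_not_isRoot_derivative
  · simp [eval_finsetSum, hroot]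
  · have hweighted : κ * (derivative (X ^ k - ∑ i ∈ Icc 1 k, C (a i) * X ^ (k - i))).eval κ =
        ∑ i ∈ Icc 1 k, a i * i * κ ^ (k - i) := by
      rw [mul_eval_derivative_X_pow_sub_sum, hroot, mul_sum, ← sum_sub_distrib]
      refine sum_congr rfl fun i hi => ?_
      rw [Nat.cast_sub (mem_Icc.mp hi).2]
      ring
    have hpos : 0 < ∑ i ∈ Icc 1 k, a i * i * κ ^ (k - i) :=
      sum_pos' (fun i _ => by have := ha i; positivity)
        ⟨1, mem_Icc.mpr ⟨le_rfl, hk⟩, by simpa using mul_pos h1 (pow_pos hκ (k - 1))⟩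
    intro hd
    rw [IsRoot.def.mp hd, mul_zero] at hweighted
    exact hpos.ne hweighted

end

theorem stmt6_general (k : ℕ) (lam : ℕ → ℕ) (hk : 1 ≤ k)
    (h1 : 1 ≤ lam 1) :
    ∃ κ : ℝ, 0 < κ ∧
      κ ^ k = ∑ i ∈ Finset.Icc 1 k, (lam i : ℝ) * κ ^ (k - i) ∧
      (∀ x : ℝ, 0 < x → x ^ k = ∑ i ∈ Finset.Icc 1 k, (lam i : ℝ) * x ^ (k - i) → x = κ) ∧
      Polynomial.rootMultiplicity κ
        (Polynomial.X ^ k -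
          ∑ i ∈ Finset.Icc 1 k, Polynomial.C (lam i : ℝ) * Polynomial.X ^ (k - i)) = 1 ∧
      ∀ z : ℂ, z ^ k = ∑ i ∈ Finset.Icc 1 k, (lam i : ℂ) * z ^ (k - i) →
        z ≠ (κ : ℂ) → ‖z‖ < κ := by
  set a : ℕ → ℝ := fun i => lam i
  have ha : ∀ i, 0 ≤ a i := fun i => Nat.cast_nonneg _
  have ha1 : 0 < a 1 := Nat.cast_pos.mpr h1
  obtain ⟨y, hy0, hy⟩ := exists_pos_sum_mul_pow_eq_one ha hk ha1
  have hroot_iff : ∀ x : ℝ, 0 < x → (x ^ k = ∑ i ∈ Icc 1 k, a i * x ^ (k - i) ↔ x = y⁻¹) := by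
    intro x hx
    rw [pow_eq_sum_mul_pow_sub_iff k a hx.ne', ← hy,
      (strictMonoOn_sum_mul_pow ha hk ha1).injOn.eq_iff (inv_pos.mpr hx).le hy0.le,
      inv_eq_iff_eq_inv]
  have hκroot := (hroot_iff _ (inv_pos.mpr hy0)).mpr rfl
  refine ⟨y⁻¹, inv_pos.mpr hy0, hκroot, fun x hx => (hroot_iff x hx).mp,
    rootMultiplicity_X_pow_sub_sum_eq_one ha hk ha1 (inv_pos.mpr hy0) hκroot, ?_⟩
  intro z hz hzκ
  rcases eq_or_ne z 0 with rfl | hz0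
  · simpa using hy0
  have hw : ∑ i ∈ Icc 1 k, (a i : ℂ) * z⁻¹ ^ i = 1 := by
    simpa [a, pow_eq_sum_mul_pow_sub_iff k _ hz0] using hz
  rcases lt_norm_or_eq_of_sum_mul_pow_eq_one ha hk ha1 hy0.le hy hw with h | h
  · rwa [norm_inv, lt_inv_comm₀ hy0 (norm_pos_iff.mpr hz0)] at h
  · exact absurd (by rw [← inv_inv z, h, Complex.ofReal_inv]) hzκ

/-- Cauchy–Ostrowski: `p(x) = x^k - ∑_{i=1}^k λ_i x^{k-i}` with
nonnegative integer coefficients, `λ₁ > 0` and `λ_k > 0`, has a unique positive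
real root `κ`, this root is simple, and every other complex root of `p` has
modulus strictly less than `κ`. -/
theorem stmt6 (k : ℕ) (lam : ℕ → ℕ) (hk : 1 ≤ k)
    (h1 : 1 ≤ lam 1) (hkpos : 1 ≤ lam k) :
    ∃ κ : ℝ, 0 < κ ∧
      κ ^ k = ∑ i ∈ Finset.Icc 1 k, (lam i : ℝ) * κ ^ (k - i) ∧
      (∀ x : ℝ, 0 < x → x ^ k = ∑ i ∈ Finset.Icc 1 k, (lam i : ℝ) * x ^ (k - i) → x = κ) ∧
      Polynomial.rootMultiplicity κ
        (Polynomial.X ^ k -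
          ∑ i ∈ Finset.Icc 1 k, Polynomial.C (lam i : ℝ) * Polynomial.X ^ (k - i)) = 1 ∧
      ∀ z : ℂ, z ^ k = ∑ i ∈ Finset.Icc 1 k, (lam i : ℂ) * z ^ (k - i) →
        z ≠ (κ : ℂ) → ‖z‖ < κ :=
  stmt6_general k lam hk h1
end

section
/- With L(j,t) as defined above, L(j,0) = 1 for all integers j ≥ 0. -/
open Finset

section

variable {R : Type*} [CommRing R] (lam : ℕ → ℕ)

theorem sum_range_Lam_mul_sub (f : ℕ → R) (j : ℕ) :
    ∑ s ∈ range j, (Lam lam (j - s) : R) * (f (s + 1) - f s) =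
      ∑ i ∈ Icc 1 j, (lam i : R) * (f (j + 1 - i) - f 0) := by
  simp only [Lam, Nat.cast_sum, sum_mul]
  rw [sum_comm' (t' := Icc 1 j) (s' := fun i => range (j + 1 - i))
    (fun s i => by simp only [mem_range, mem_Icc]; omega)]
  refine sum_congr rfl fun i _ => ?_
  rw [← mul_sum, sum_range_sub f]

variable {k : ℕ} {a : ℤ → R}

theorem sum_Icc_lam_mul_eq_of_le (hzero : ∀ i, k < i → lam i = 0) (g : ℕ → R) {m : ℕ}
    (hkm : k ≤ m) : ∑ i ∈ Icc 1 m, (lam i : R) * g i = ∑ i ∈ Icc 1 k, (lam i : R) * g i := by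
  refine (sum_subset (Icc_subset_Icc_right hkm) fun i hi hik => ?_).symm
  simp only [mem_Icc, not_and, not_le] at hi hik
  simp [hzero i (hik hi.1)]

theorem sum_Icc_lam_mul_sub_one (hzero : ∀ i, k < i → lam i = 0)
    (ha0 : ∀ i : ℤ, i ≤ 0 → a i = 1)
    (harec : ∀ n : ℤ, 1 ≤ n → a n = ∑ i ∈ Icc 1 k, (lam i : R) * a (n - i)) (j : ℕ) :
    ∑ i ∈ Icc 1 j, (lam i : R) * (a (j + 1 - i) - 1) = a (j + 1) - Lam lam k := by
  have hrec : a (j + 1) - Lam lam k = ∑ i ∈ Icc 1 k, (lam i : R) * (a (j + 1 - i) - 1) := by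
    simp only [harec (j + 1) (by omega), Lam, Nat.cast_sum, mul_sub, mul_one, sum_sub_distrib]
  rw [hrec, ← sum_Icc_lam_mul_eq_of_le lam hzero _ (le_max_right j k)]
  refine sum_subset (Icc_subset_Icc_right (le_max_left j k)) fun i hi hij => ?_
  simp only [mem_Icc, not_and, not_le] at hi hij
  rw [ha0 _ (by omega), sub_self, mul_zero]

theorem sum_range_Lam_sub_one_mul_sub (hzero : ∀ i, k < i → lam i = 0)
    (ha0 : ∀ i : ℤ, i ≤ 0 → a i = 1)
    (harec : ∀ n : ℤ, 1 ≤ n → a n = ∑ i ∈ Icc 1 k, (lam i : R) * a (n - i)) (j : ℕ) :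
    ∑ s ∈ range j, ((Lam lam (j - s) : R) - 1) * (a (s + 1) - a s) =
      a (j + 1) - a j - ((Lam lam k : R) - 1) := by
  have hswap := sum_range_Lam_mul_sub lam (fun n : ℕ => a n) j
  have htel := sum_range_sub (fun n : ℕ => a n) j
  push_cast at hswap htel
  rw [ha0 0 le_rfl] at hswap htel
  have hcast : ∀ i ∈ Icc 1 j, (lam i : R) * (a ((j + 1 - i : ℕ) : ℤ) - 1) =
      (lam i : R) * (a (j + 1 - i) - 1) := by
    intro i hi
    rw [Nat.cast_sub (by simp only [mem_Icc] at hi; omega)]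
    push_cast; rfl
  rw [sum_congr rfl hcast, sum_Icc_lam_mul_sub_one lam hzero ha0 harec] at hswap
  simp only [sub_one_mul, sum_sub_distrib, hswap, htel]
  ring

end

theorem stmt10_general (k : ℕ) (lam : ℕ → ℕ)
    (hzero : ∀ i, k < i → lam i = 0)
    (hΛ : 2 ≤ Lam lam k)
    (a : ℤ → ℚ)
    (ha0 : ∀ i : ℤ, i ≤ 0 → a i = 1)
    (harec : ∀ n : ℤ, 1 ≤ n → a n = ∑ i ∈ Finset.Icc 1 k, (lam i : ℚ) * a (n - i))
    (L : ℕ → ℕ → ℚ)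
    (hLjj : ∀ j : ℕ, L j j = (a (j + 1) - a j) / ((Lam lam k : ℚ) - 1))
    (hLrec : ∀ j t : ℕ, t < j →
      L j t = L j (t + 1) -
        ((Lam lam (j - t) : ℚ) - 1) * (a (t + 1) - a t) / ((Lam lam k : ℚ) - 1)) :
    ∀ j : ℕ, L j 0 = 1 := by
  intro j
  have hΛ1 : (Lam lam k : ℚ) - 1 ≠ 0 := by
    have : (2 : ℚ) ≤ Lam lam k := by exact_mod_cast hΛ
    linarith
  have htel : L j j - L j 0 =
      ∑ t ∈ range j, ((Lam lam (j - t) : ℚ) - 1) * (a (t + 1) - a t) / ((Lam lam k : ℚ) - 1) := by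
    rw [← sum_range_sub (L j)]
    exact sum_congr rfl fun t ht => by rw [hLrec j t (mem_range.mp ht)]; ring
  rw [← sum_div, sum_range_Lam_sub_one_mul_sub lam hzero ha0 harec, hLjj] at htel
  field_simp at htel
  exact mul_left_cancel₀ hΛ1 (by linarith)

/-- `L(j,0) = 1` for all `j ≥ 0`. -/
theorem stmt10 (k : ℕ) (lam : ℕ → ℕ) (hk : 1 ≤ k)
    (h1 : 1 ≤ lam 1) (hkpos : 1 ≤ lam k) (hzero : ∀ i, k < i → lam i = 0)
    (hΛ : 2 ≤ Lam lam k)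
    (a : ℤ → ℚ)
    (ha0 : ∀ i : ℤ, i ≤ 0 → a i = 1)
    (harec : ∀ n : ℤ, 1 ≤ n → a n = ∑ i ∈ Finset.Icc 1 k, (lam i : ℚ) * a (n - i))
    (L : ℕ → ℕ → ℚ)
    (hLjj : ∀ j : ℕ, L j j = (a (j + 1) - a j) / ((Lam lam k : ℚ) - 1))
    (hLrec : ∀ j t : ℕ, t < j →
      L j t = L j (t + 1) -
        ((Lam lam (j - t) : ℚ) - 1) * (a (t + 1) - a t) / ((Lam lam k : ℚ) - 1)) :
    ∀ j : ℕ, L j 0 = 1 :=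
  stmt10_general k lam hzero hΛ a ha0 harec L hLjj hLrec
end

section
/- With L(j,t) as defined above, for all integers 1 ≤ t ≤ j: L(j,t) = Σ_{i=1}^{t} λ_i L(j−i, t−i) + Σ_{i=t+1}^{j} λ_i. -/
/-!
Write `c = Λ - 1`. The recurrence of `a` still holds with the sum cut off at any `t ≥ n - 1`, up
to the boundary term `Λ - Λ_t` from the indices `i > t`, where `a (n - i) = 1`. Subtracting two
such instances shows that the increments `a (t + 1) - a t = c · L(t,t)` satisfy the recurrence
with no boundary term: this is the case `t = j`. Lowering `t` by one changes both sides of the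
identity by the same amount, provided `L(m,0) = 1` for `m < j`. Since `a 1 - a 0 = c`, we have
`L(m,0) = L(m,1) - (Λ_m - 1)`, and the case `t = 1` gives `L(m,1) = Λ_m` from `L(m-1,0) = 1`;
so everything follows by a joint induction on `j`.
-/

open Finset

theorem Finset.sum_Icc_consecutive {M : Type*} [AddCommMonoid M] (f : ℕ → M) {m n k : ℕ}
    (hmn : m ≤ n + 1) (hnk : n ≤ k) :
    ∑ i ∈ Icc m n, f i + ∑ i ∈ Icc (n + 1) k, f i = ∑ i ∈ Icc m k, f i := by
  simp only [← Ico_add_one_right_eq_Icc]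
  exact sum_Ico_consecutive f hmn (by omega)

theorem Lam_add_sum_Icc (lam : ℕ → ℕ) {t n : ℕ} (h : t ≤ n) :
    Lam lam t + ∑ i ∈ Icc (t + 1) n, lam i = Lam lam n :=
  sum_Icc_consecutive lam (by omega) h

theorem Lam_eq_of_le {k : ℕ} {lam : ℕ → ℕ} (hzero : ∀ i, k < i → lam i = 0) {n : ℕ}
    (h : k ≤ n) : Lam lam n = Lam lam k := by
  rw [← Lam_add_sum_Icc lam h, add_eq_left]
  exact sum_eq_zero fun i hi => hzero i (by simp only [mem_Icc] at hi; omega)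

section

variable {k : ℕ} {lam : ℕ → ℕ} {a : ℤ → ℚ} {L : ℕ → ℕ → ℚ}

theorem sum_Icc_lam_mul_eq (hzero : ∀ i, k < i → lam i = 0) (ha0 : ∀ i : ℤ, i ≤ 0 → a i = 1)
    (harec : ∀ n : ℤ, 1 ≤ n → a n = ∑ i ∈ Icc 1 k, (lam i : ℚ) * a (n - i))
    {n : ℤ} {t : ℕ} (hn : 1 ≤ n) (hnt : n ≤ t + 1) :
    ∑ i ∈ Icc 1 t, (lam i : ℚ) * a (n - i) = a n - Lam lam k + Lam lam t := by
  set N := max t k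
  have hfull : ∑ i ∈ Icc 1 k, (lam i : ℚ) * a (n - i) = ∑ i ∈ Icc 1 N, (lam i : ℚ) * a (n - i) :=
    sum_subset (Icc_subset_Icc_right (le_max_right t k)) fun i hi hik => by
      simp only [mem_Icc] at hi hik
      simp [hzero i (by omega)]
  have htail : ∑ i ∈ Icc (t + 1) N, (lam i : ℚ) * a (n - i) = ∑ i ∈ Icc (t + 1) N, (lam i : ℚ) :=
    sum_congr rfl fun i hi => by
      simp only [mem_Icc] at hi
      rw [ha0 _ (by omega), mul_one]
  have hLam : (Lam lam t : ℚ) + ∑ i ∈ Icc (t + 1) N, (lam i : ℚ) = Lam lam k := by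
    exact_mod_cast (Lam_add_sum_Icc lam (le_max_left t k)).trans
      (Lam_eq_of_le hzero (le_max_right t k))
  rw [harec n hn, hfull, ← sum_Icc_consecutive _ (by omega) (le_max_left t k), htail, ← hLam]
  ring

theorem sum_Icc_lam_mul_sub (hzero : ∀ i, k < i → lam i = 0) (ha0 : ∀ i : ℤ, i ≤ 0 → a i = 1)
    (harec : ∀ n : ℤ, 1 ≤ n → a n = ∑ i ∈ Icc 1 k, (lam i : ℚ) * a (n - i))
    {t : ℕ} (ht : 1 ≤ t) :
    ∑ i ∈ Icc 1 t, (lam i : ℚ) * (a ((t - i : ℕ) + 1) - a (t - i : ℕ)) = a (t + 1) - a t := by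
  have hcast : ∀ i ∈ Icc 1 t, (lam i : ℚ) * (a ((t - i : ℕ) + 1) - a (t - i : ℕ))
      = lam i * a (t + 1 - i) - lam i * a (t - i) := by
    intro i hi
    rw [Nat.cast_sub (mem_Icc.mp hi).2, sub_add_eq_add_sub, mul_sub]
  rw [sum_congr rfl hcast, sum_sub_distrib,
    sum_Icc_lam_mul_eq hzero ha0 harec (by omega) le_rfl,
    sum_Icc_lam_mul_eq hzero ha0 harec (by omega) (by omega)]
  ring

theorem L_eq_sum_of_L_zero_eq_one (hzero : ∀ i, k < i → lam i = 0)
    (ha0 : ∀ i : ℤ, i ≤ 0 → a i = 1)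
    (harec : ∀ n : ℤ, 1 ≤ n → a n = ∑ i ∈ Icc 1 k, (lam i : ℚ) * a (n - i))
    (hLjj : ∀ j : ℕ, L j j = (a (j + 1) - a j) / ((Lam lam k : ℚ) - 1))
    (hLrec : ∀ j t : ℕ, t < j →
      L j t = L j (t + 1) -
        ((Lam lam (j - t) : ℚ) - 1) * (a (t + 1) - a t) / ((Lam lam k : ℚ) - 1))
    {j : ℕ} (hL0 : ∀ m < j, L m 0 = 1) {t : ℕ} (ht : 1 ≤ t) (htj : t ≤ j) :
    L j t = (∑ i ∈ Icc 1 t, (lam i : ℚ) * L (j - i) (t - i))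
      + ∑ i ∈ Icc (t + 1) j, (lam i : ℚ) := by
  obtain ⟨d, hd⟩ : ∃ d, t + d = j := ⟨j - t, by omega⟩
  induction d generalizing t with
  | zero =>
    obtain rfl : t = j := hd
    have hdiag : ∀ i ∈ Icc 1 t, (lam i : ℚ) * L (t - i) (t - i)
        = lam i * (a ((t - i : ℕ) + 1) - a (t - i : ℕ)) / ((Lam lam k : ℚ) - 1) := by
      intro i _
      rw [hLjj, mul_div_assoc]
    rw [sum_congr rfl hdiag, ← sum_div, sum_Icc_lam_mul_sub hzero ha0 harec ht, hLjj,
      Icc_eq_empty (by omega), sum_empty, add_zero]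
  | succ d ih =>
    have hstep := hLrec j t (by omega)
    rw [show j - t = d + 1 by omega] at hstep
    have hnext := ih (t := t + 1) (by omega) (by omega) (by omega)
    rw [sum_Icc_succ_top (by omega), Nat.sub_self, hL0 _ (by omega), mul_one] at hnext
    have hsplit : ∑ i ∈ Icc (t + 1) j, (lam i : ℚ)
        = lam (t + 1) + ∑ i ∈ Icc (t + 1 + 1) j, (lam i : ℚ) := by
      rw [← sum_Icc_consecutive (m := t + 1) (n := t + 1) _ (by omega) (by omega : t + 1 ≤ j),
        Icc_self, sum_singleton]
    have hshift : ∀ i ∈ Icc 1 t, (lam i : ℚ) * L (j - i) (t - i)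
        = lam i * L (j - i) (t + 1 - i) - ((Lam lam (d + 1) : ℚ) - 1) / ((Lam lam k : ℚ) - 1)
          * (lam i * (a ((t - i : ℕ) + 1) - a (t - i : ℕ))) := by
      intro i hi
      simp only [mem_Icc] at hi
      rw [hLrec (j - i) (t - i) (by omega), show j - i - (t - i) = d + 1 by omega,
        show t - i + 1 = t + 1 - i by omega]
      ring
    rw [hstep, hnext, sum_congr rfl hshift, sum_sub_distrib, ← mul_sum,
      sum_Icc_lam_mul_sub hzero ha0 harec ht, hsplit]
    ring

theorem L_zero_eq_one (hzero : ∀ i, k < i → lam i = 0) (hΛ : 2 ≤ Lam lam k)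
    (ha0 : ∀ i : ℤ, i ≤ 0 → a i = 1)
    (harec : ∀ n : ℤ, 1 ≤ n → a n = ∑ i ∈ Icc 1 k, (lam i : ℚ) * a (n - i))
    (hLjj : ∀ j : ℕ, L j j = (a (j + 1) - a j) / ((Lam lam k : ℚ) - 1))
    (hLrec : ∀ j t : ℕ, t < j →
      L j t = L j (t + 1) -
        ((Lam lam (j - t) : ℚ) - 1) * (a (t + 1) - a t) / ((Lam lam k : ℚ) - 1))
    (m : ℕ) : L m 0 = 1 := by
  have hc : (Lam lam k : ℚ) - 1 ≠ 0 := by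
    have : (2 : ℚ) ≤ Lam lam k := by exact_mod_cast hΛ
    linarith
  have ha1 : a ((0 : ℕ) + 1) - a (0 : ℕ) = Lam lam k - 1 := by
    have h := sum_Icc_lam_mul_eq hzero ha0 harec (n := 1) (t := 0) le_rfl le_rfl
    have hLam0 : Lam lam 0 = 0 := by simp [Lam]
    simp only [Icc_eq_empty_of_lt zero_lt_one, sum_empty, hLam0, Nat.cast_zero, add_zero] at h
    simp only [Nat.cast_zero, zero_add, ha0 0 le_rfl]
    linarith
  induction m using Nat.strong_induction_on with
  | _ m ih =>
    rcases m with _ | m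
    · rw [hLjj, ha1, div_self hc]
    · have hone := L_eq_sum_of_L_zero_eq_one hzero ha0 harec hLjj hLrec ih le_rfl (by omega)
      have hLam : (lam 1 : ℚ) + ∑ i ∈ Icc (1 + 1) (m + 1), (lam i : ℚ) = Lam lam (m + 1) := by
        exact_mod_cast Lam_add_sum_Icc lam (by omega : 1 ≤ m + 1)
      rw [hLrec _ _ (by omega : 0 < m + 1), ha1, mul_div_assoc, div_self hc, hone, Icc_self,
        sum_singleton, Nat.sub_self, Nat.add_sub_cancel, ih m (by omega), Nat.sub_zero, mul_one,
        hLam]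
      ring

end

theorem stmt11_general (k : ℕ) (lam : ℕ → ℕ) (hzero : ∀ i, k < i → lam i = 0)
    (hΛ : 2 ≤ Lam lam k)
    (a : ℤ → ℚ)
    (ha0 : ∀ i : ℤ, i ≤ 0 → a i = 1)
    (harec : ∀ n : ℤ, 1 ≤ n → a n = ∑ i ∈ Finset.Icc 1 k, (lam i : ℚ) * a (n - i))
    (L : ℕ → ℕ → ℚ)
    (hLjj : ∀ j : ℕ, L j j = (a (j + 1) - a j) / ((Lam lam k : ℚ) - 1))
    (hLrec : ∀ j t : ℕ, t < j →
      L j t = L j (t + 1) -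
        ((Lam lam (j - t) : ℚ) - 1) * (a (t + 1) - a t) / ((Lam lam k : ℚ) - 1)) :
    ∀ j t : ℕ, 1 ≤ t → t ≤ j →
      L j t = (∑ i ∈ Finset.Icc 1 t, (lam i : ℚ) * L (j - i) (t - i))
        + ∑ i ∈ Finset.Icc (t + 1) j, (lam i : ℚ) :=
  fun _ _ ht htj => L_eq_sum_of_L_zero_eq_one hzero ha0 harec hLjj hLrec
    (fun m _ => L_zero_eq_one hzero hΛ ha0 harec hLjj hLrec m) ht htj

/-- for `1 ≤ t ≤ j`, `L(j,t) = ∑_{i=1}^t λ_i L(j-i,t-i) + ∑_{i=t+1}^j λ_i`. -/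
theorem stmt11 (k : ℕ) (lam : ℕ → ℕ) (hk : 1 ≤ k)
    (h1 : 1 ≤ lam 1) (hkpos : 1 ≤ lam k) (hzero : ∀ i, k < i → lam i = 0)
    (hΛ : 2 ≤ Lam lam k)
    (a : ℤ → ℚ)
    (ha0 : ∀ i : ℤ, i ≤ 0 → a i = 1)
    (harec : ∀ n : ℤ, 1 ≤ n → a n = ∑ i ∈ Finset.Icc 1 k, (lam i : ℚ) * a (n - i))
    (L : ℕ → ℕ → ℚ)
    (hLjj : ∀ j : ℕ, L j j = (a (j + 1) - a j) / ((Lam lam k : ℚ) - 1))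
    (hLrec : ∀ j t : ℕ, t < j →
      L j t = L j (t + 1) -
        ((Lam lam (j - t) : ℚ) - 1) * (a (t + 1) - a t) / ((Lam lam k : ℚ) - 1)) :
    ∀ j t : ℕ, 1 ≤ t → t ≤ j →
      L j t = (∑ i ∈ Finset.Icc 1 t, (lam i : ℚ) * L (j - i) (t - i))
        + ∑ i ∈ Finset.Icc (t + 1) j, (lam i : ℚ) :=
  stmt11_general k lam hzero hΛ a ha0 harec L hLjj hLrec
end

section
/- With L(j,t) as above, for all integers 0 ≤ t ≤ j and all n ≥ k, L(j+n, t+n) = Σ_{i=1}^{k} λ_i L(j+n−i, t+n−i); that is, for fixed difference j−t, the sequence n ↦ L(j+n, t+n) eventually satisfies the linear recurrence a. -/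
open Finset

section VanishingTail

variable {M : Type*} [AddCommMonoid M] {f : ℕ → M} {k : ℕ}

theorem sum_Icc_eq_zero_of_vanishing (hf : ∀ i, k < i → f i = 0) {a b : ℕ} (hka : k < a) :
    ∑ i ∈ Icc a b, f i = 0 :=
  sum_eq_zero fun i hi => hf i (by grind)

theorem sum_Icc_one_eq_of_vanishing (hf : ∀ i, k < i → f i = 0) {t : ℕ} (hkt : k ≤ t) :
    ∑ i ∈ Icc 1 t, f i = ∑ i ∈ Icc 1 k, f i :=
  (sum_subset (Icc_subset_Icc_right hkt) fun i _ hik => hf i (by grind)).symm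

end VanishingTail

theorem stmt12_general (k : ℕ) (lam : ℕ → ℕ) (hk : 1 ≤ k)
    (hzero : ∀ i, k < i → lam i = 0)
    (L : ℕ → ℕ → ℚ)
    (hLrec : ∀ j t : ℕ, 1 ≤ t → t ≤ j →
      L j t = (∑ i ∈ Finset.Icc 1 t, (lam i : ℚ) * L (j - i) (t - i))
        + ∑ i ∈ Finset.Icc (t + 1) j, (lam i : ℚ)) :
    ∀ j t n : ℕ, t ≤ j → k ≤ n →
      L (j + n) (t + n) = ∑ i ∈ Finset.Icc 1 k, (lam i : ℚ) * L (j + n - i) (t + n - i) := by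
  intro j t n htj hkn
  have hlam : ∀ i, k < i → (lam i : ℚ) = 0 := fun i hi => by simp [hzero i hi]
  have hterm : ∀ i, k < i → (lam i : ℚ) * L (j + n - i) (t + n - i) = 0 :=
    fun i hi => by rw [hlam i hi, zero_mul]
  -- Since `t + n ≥ k`, `λ_i = 0` for `i > k` kills the constant tail and truncates the sum at `k`.
  rw [hLrec _ _ (by omega) (by omega), sum_Icc_eq_zero_of_vanishing hlam (by omega), add_zero,
    sum_Icc_one_eq_of_vanishing hterm (by omega)]

/-- if `L(j,0) = 1` and
`L(j,t) = ∑_{i=1}^t λ_i L(j-i,t-i) + ∑_{i=t+1}^j λ_i` for `1 ≤ t ≤ j`, then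
for `0 ≤ t ≤ j` and `n ≥ k`,
`L(j+n, t+n) = ∑_{i=1}^k λ_i L(j+n-i, t+n-i)`; i.e. for fixed `j - t` the
sequence `n ↦ L(j+n, t+n)` eventually satisfies the linear recurrence `a`. -/
theorem stmt12 (k : ℕ) (lam : ℕ → ℕ) (hk : 1 ≤ k)
    (h1 : 1 ≤ lam 1) (hkpos : 1 ≤ lam k) (hzero : ∀ i, k < i → lam i = 0)
    (hΛ : 2 ≤ ∑ i ∈ Finset.Icc 1 k, lam i)
    (L : ℕ → ℕ → ℚ)
    (hL0 : ∀ j : ℕ, L j 0 = 1)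
    (hLrec : ∀ j t : ℕ, 1 ≤ t → t ≤ j →
      L j t = (∑ i ∈ Finset.Icc 1 t, (lam i : ℚ) * L (j - i) (t - i))
        + ∑ i ∈ Finset.Icc (t + 1) j, (lam i : ℚ)) :
    ∀ j t n : ℕ, t ≤ j → k ≤ n →
      L (j + n) (t + n) = ∑ i ∈ Finset.Icc 1 k, (lam i : ℚ) * L (j + n - i) (t + n - i) :=
  stmt12_general k lam hk hzero L hLrec
end

section
/- Let k > 1 and suppose Λ = 2, so the recurrence is a_n = a_{n-1} + a_{n-k} with a_i = 1 for i ≤ 0. Then the a-Zeckendorf representation system is a place value system with place values a_0, a_1, a_2, …: for every positive integer N, if d_M,…,d_0 is the a-Zeckendorf representation of N, then N = Σ_{i=0}^{M} d_i a_i, where each d_i ∈ {0,1} and any two 1-digits are separated by at least k−1 zeroes. -/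
/-- Length-then-lexicographic order on digit sequences. -/
def ZOrd (l₁ l₂ : List ℕ) : Prop :=
  l₁.length < l₂.length ∨
    (l₁.length = l₂.length ∧ List.Lex (· < ·) l₁.reverse l₂.reverse)

/-! With `Λ = 2` the valid sequences are exactly the `0`/`1` strings whose ones are at least `k`
apart. For such a string the weighted digits below position `m` sum to less than `a m`, because
`a (m + 1) = a m + a (m + 1 - k)`; hence the value `∑ dᵢ aᵢ` is strictly increasing in the
length-then-lex order. The greedy algorithm attains every positive integer, so the valid sequences
below the `N`-th one have exactly the values `1, …, N - 1`. -/

namespace AZeckendorf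

open Finset

def placeValue (a : ℤ → ℤ) (l : List ℕ) : ℤ :=
  ∑ i ∈ range l.length, (l.getD i 0 : ℤ) * a i

def Separated (k : ℕ) (l : List ℕ) : Prop :=
  ∀ i j, i < j → l.getD i 0 = 1 → l.getD j 0 = 1 → i + k ≤ j

def IsZeckendorf (k : ℕ) (l : List ℕ) : Prop :=
  (∀ x ∈ l, x ≤ 1) ∧ l.getLast? ≠ some 0 ∧ Separated k l

lemma ncard_setOf_rel_eq {α : Type*} {s : Set α} {r : α → α → Prop} {f : α → ℤ}
    (htri : ∀ x y, r x y ∨ x = y ∨ r y x) (hmono : ∀ x ∈ s, ∀ y ∈ s, r x y → f x < f y)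
    (himage : f '' s = Set.Ici 1) {x : α} (hx : x ∈ s) :
    ({y | y ∈ s ∧ r y x}.ncard : ℤ) = f x - 1 := by
  have hpos : ∀ y ∈ s, 1 ≤ f y := fun y hy => (himage ▸ Set.mem_image_of_mem f hy : f y ∈ _)
  have hinj : Set.InjOn f {y | y ∈ s ∧ r y x} := fun y hy z hz hyz => by
    rcases htri y z with h | h | h
    · exact absurd hyz (hmono y hy.1 z hz.1 h).ne
    · exact h
    · exact absurd hyz (hmono z hz.1 y hy.1 h).ne'
  have himg : f '' {y | y ∈ s ∧ r y x} = Set.Ico 1 (f x) := by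
    ext n
    constructor
    · rintro ⟨y, ⟨hy, hyx⟩, rfl⟩
      exact ⟨hpos y hy, hmono y hy x hx hyx⟩
    · rintro ⟨h1, hlt⟩
      obtain ⟨y, hy, rfl⟩ : n ∈ f '' s := himage ▸ h1
      refine ⟨y, ⟨hy, ?_⟩, rfl⟩
      rcases htri y x with h | rfl | h
      · exact h
      · exact absurd hlt (lt_irrefl _)
      · exact absurd hlt (hmono x hx y hy h).asymm
  rw [← hinj.ncard_image, himg, ← Finset.coe_Ico, Set.ncard_coe_finset, Int.card_Ico,
    Int.toNat_of_nonneg (by linarith [hpos x hx])]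

section Digits

variable {l : List ℕ}

lemma getD_le_one (h : ∀ x ∈ l, x ≤ 1) (i : ℕ) : l.getD i 0 ≤ 1 := by
  rcases lt_or_ge i l.length with hi | hi
  · rw [List.getD_eq_getElem _ _ hi]
    exact h _ (List.getElem_mem hi)
  · rw [List.getD_eq_default _ _ hi]
    exact zero_le_one

lemma getD_length_sub_one_ne_zero (hl : l ≠ []) (hlast : l.getLast? ≠ some 0) :
    l.getD (l.length - 1) 0 ≠ 0 := by
  rwa [List.getLast?_eq_some_getLast hl, List.getLast_eq_getElem, ne_eq, Option.some.injEq,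
    ← List.getD_eq_getElem] at hlast

lemma lt_length_of_getD_ne_zero {i : ℕ} (h : l.getD i 0 ≠ 0) : i < l.length := by
  by_contra hi
  exact h (List.getD_eq_default _ _ (not_lt.1 hi))

lemma exists_getD_lt_of_zOrd {l₁ l₂ : List ℕ} (h : ZOrd l₁ l₂) (hlast : l₂.getLast? ≠ some 0) :
    ∃ p < l₂.length, l₁.getD p 0 < l₂.getD p 0 ∧
      ∀ q, p < q → q < l₂.length → l₁.getD q 0 = l₂.getD q 0 := by
  rcases h with hlen | ⟨hlen, hlex⟩
  · have hne : l₂ ≠ [] := by rintro rfl; simp at hlen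
    refine ⟨l₂.length - 1, by omega, ?_, fun q hq hq' => by omega⟩
    rw [List.getD_eq_default _ _ (by omega)]
    exact Nat.pos_of_ne_zero (getD_length_sub_one_ne_zero hne hlast)
  · rcases List.lt_iff_exists.1 hlex with ⟨_, hlt⟩ | ⟨i, h₁, h₂, hpre, hlt⟩
    · simp [hlen] at hlt
    · simp only [List.length_reverse] at h₁ h₂
      refine ⟨l₂.length - 1 - i, by omega, ?_, fun q hq hq' => ?_⟩
      · rwa [← List.getD_eq_getElem _ 0, ← List.getD_eq_getElem _ 0,
          List.getD_reverse _ h₁, List.getD_reverse _ h₂, hlen] at hlt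
      · have := hpre (l₂.length - 1 - q) (by omega)
        rwa [← List.getD_eq_getElem _ 0, ← List.getD_eq_getElem _ 0,
          List.getD_reverse _ (by omega), List.getD_reverse _ (by omega), hlen,
          Nat.sub_sub_self (by omega)] at this

lemma _root_.ZOrd.length_le {l₁ l₂ : List ℕ} (h : ZOrd l₁ l₂) : l₁.length ≤ l₂.length :=
  h.elim le_of_lt fun h => h.1.le

lemma zOrd_trichotomous (l₁ l₂ : List ℕ) : ZOrd l₁ l₂ ∨ l₁ = l₂ ∨ ZOrd l₂ l₁ := by
  rcases lt_trichotomy l₁.length l₂.length with h | h | h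
  · exact Or.inl (Or.inl h)
  · rcases lt_trichotomy l₁.reverse l₂.reverse with hl | hl | hl
    · exact Or.inl (Or.inr ⟨h, hl⟩)
    · exact Or.inr (Or.inl (List.reverse_injective hl))
    · exact Or.inr (Or.inr (Or.inr ⟨h.symm, hl⟩))
  · exact Or.inr (Or.inr (Or.inl h))

end Digits

section Sums

variable {a : ℤ → ℤ} {l : List ℕ}

lemma sum_range_getD_eq_of_le {n m : ℕ} (hnm : n ≤ m)
    (hzero : ∀ i, n ≤ i → i < m → l.getD i 0 = 0) :
    ∑ i ∈ range m, (l.getD i 0 : ℤ) * a i = ∑ i ∈ range n, (l.getD i 0 : ℤ) * a i := by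
  refine (sum_subset (range_subset_range.2 hnm) fun i hm hn => ?_).symm
  rw [hzero i (by simpa using hn) (by simpa using hm)]
  simp

@[simp]
lemma placeValue_nil : placeValue a [] = 0 := rfl

lemma placeValue_eq_sum_range {m : ℕ} (hm : l.length ≤ m) :
    placeValue a l = ∑ i ∈ range m, (l.getD i 0 : ℤ) * a i :=
  (sum_range_getD_eq_of_le hm fun _ hi _ => List.getD_eq_default _ _ hi).symm

lemma getD_append_replicate_one (j i : ℕ) :
    (l ++ List.replicate j 0 ++ [1]).getD i 0 =
      if i < l.length then l.getD i 0 else if i = l.length + j then 1 else 0 := by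
  split_ifs with h₁ h₂
  · rw [List.getD_append _ _ _ _ (by simp; omega), List.getD_append _ _ _ _ h₁]
  · subst h₂
    rw [List.getD_append_right _ _ _ _ (by simp)]
    simp
  · rcases lt_or_gt_of_ne h₂ with h | h
    · rw [List.getD_append _ _ _ _ (by simp; omega), List.getD_append_right _ _ _ _ (by omega),
        List.getD_replicate _ (by omega)]
    · exact List.getD_eq_default _ _ (by simp; omega)

lemma placeValue_append_replicate_one (j : ℕ) :
    placeValue a (l ++ List.replicate j 0 ++ [1]) = placeValue a l + a ↑(l.length + j) := by
  have hlen : (l ++ List.replicate j 0 ++ [1]).length = l.length + j + 1 := by simp; omega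
  have hmid : ∀ i, l.length ≤ i → i < l.length + j →
      (l ++ List.replicate j 0 ++ [1]).getD i 0 = 0 := fun i h₁ h₂ => by
    rw [getD_append_replicate_one, if_neg (by omega), if_neg (by omega)]
  rw [placeValue, hlen, sum_range_succ, sum_range_getD_eq_of_le (by omega) hmid, placeValue]
  rw [getD_append_replicate_one, if_neg (by omega : ¬l.length + j < l.length), if_pos rfl,
    Nat.cast_one, one_mul]
  congr 1
  exact sum_congr rfl fun i hi => by rw [getD_append_replicate_one, if_pos (mem_range.1 hi)]

lemma IsZeckendorf.append_replicate_one {k j : ℕ} (hl : IsZeckendorf k l)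
    (hsep : ∀ i, l.getD i 0 = 1 → i + k ≤ l.length + j) :
    IsZeckendorf k (l ++ List.replicate j 0 ++ [1]) := by
  obtain ⟨hbin, -, hsepl⟩ := hl
  refine ⟨fun x hx => ?_, by simp, fun i i' hii' hi hi' => ?_⟩
  · simp only [List.mem_append, List.mem_replicate, List.mem_singleton] at hx
    rcases hx with (hx | hx) | hx
    · exact hbin x hx
    · omega
    · omega
  · rw [getD_append_replicate_one] at hi hi'
    split_ifs at hi hi' with h₁ h₂ h₃ <;>
      first | omega | exact hsepl i i' hii' hi hi' | exact h₃ ▸ hsep i hi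

end Sums

section Recurrence

variable {k : ℕ} {a : ℤ → ℤ} (hk : 0 < k) (ha0 : ∀ i : ℤ, i ≤ 0 → a i = 1)
  (harec : ∀ n : ℤ, 1 ≤ n → a n = a (n - 1) + a (n - k))
include ha0 harec

-- Truncated subtraction is harmless here: `a` is `1` at every index `≤ 0`.
lemma a_natCast_succ (n : ℕ) : a ↑(n + 1) = a n + a ↑(n + 1 - k) := by
  rw [harec _ (by omega), Nat.cast_succ, add_sub_cancel_right]
  rcases le_or_gt k (n + 1) with h | h
  · rw [Nat.cast_sub h, Nat.cast_succ]
  · rw [Nat.sub_eq_zero_of_le h.le, Nat.cast_zero, ha0 0 le_rfl, ha0 ((n : ℤ) + 1 - k) (by omega)]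

include hk

lemma one_le_a (n : ℕ) : 1 ≤ a n := by
  induction n using Nat.strong_induction_on with
  | _ n ih =>
    rcases n with _ | n
    · simp [ha0]
    · rw [a_natCast_succ ha0 harec]
      linarith [ih n (by omega), ih (n + 1 - k) (by omega)]

lemma a_natCast_lt_succ (n : ℕ) : a n < a ↑(n + 1) := by
  rw [a_natCast_succ ha0 harec]
  linarith [one_le_a hk ha0 harec (n + 1 - k)]

lemma natCast_lt_a (n : ℕ) : (n : ℤ) < a n := by
  induction n with
  | zero => simp [ha0]
  | succ n ih =>
    have := a_natCast_lt_succ hk ha0 harec n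
    push_cast at this ⊢
    omega

lemma sum_range_lt_a {l : List ℕ} (hbin : ∀ x ∈ l, x ≤ 1) (hsep : Separated k l) (m : ℕ) :
    ∑ i ∈ range m, (l.getD i 0 : ℤ) * a i < a m := by
  induction m using Nat.strong_induction_on with
  | _ m ih =>
    rcases m with _ | m
    · simp [ha0]
    rw [sum_range_succ, a_natCast_succ ha0 harec]
    rcases Nat.le_one_iff_eq_zero_or_eq_one.1 (getD_le_one hbin m) with h | h
    · rw [h, Nat.cast_zero, zero_mul, add_zero]
      linarith [ih m (by omega), one_le_a hk ha0 harec (m + 1 - k)]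
    · have hgap : ∀ i, m + 1 - k ≤ i → i < m → l.getD i 0 = 0 := fun i h₁ h₂ => by
        have := getD_le_one hbin i
        by_contra hne
        have := hsep i m h₂ (by omega) h
        omega
      rw [h, Nat.cast_one, one_mul, sum_range_getD_eq_of_le (by omega) hgap]
      linarith [ih (m + 1 - k) (by omega)]

lemma sum_range_lt_sum_range {l₁ l₂ : List ℕ} (hbin : ∀ x ∈ l₁, x ≤ 1)
    (hsep : Separated k l₁) {p n : ℕ} (hpn : p < n) (hp : l₁.getD p 0 < l₂.getD p 0)
    (hsame : ∀ q, p < q → q < n → l₁.getD q 0 = l₂.getD q 0) :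
    ∑ i ∈ range n, (l₁.getD i 0 : ℤ) * a i < ∑ i ∈ range n, (l₂.getD i 0 : ℤ) * a i := by
  induction n, hpn using Nat.le_induction with
  | base =>
    rw [sum_range_succ, sum_range_succ]
    have h₁ := sum_range_lt_a hk ha0 harec hbin hsep p
    have h₂ : 0 ≤ ∑ i ∈ range p, (l₂.getD i 0 : ℤ) * a i :=
      sum_nonneg fun i _ => mul_nonneg (by positivity) (by linarith [one_le_a hk ha0 harec i])
    have h₃ : ((l₁.getD p 0 : ℕ) : ℤ) + 1 ≤ l₂.getD p 0 := by exact_mod_cast hp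
    nlinarith [one_le_a hk ha0 harec p]
  | succ n hn ih =>
    rw [sum_range_succ, sum_range_succ, hsame n (by omega) (by omega)]
    linarith [ih fun q h₁ h₂ => hsame q h₁ (by omega)]

lemma placeValue_lt_of_zOrd {l₁ l₂ : List ℕ} (h₁ : IsZeckendorf k l₁) (h₂ : IsZeckendorf k l₂)
    (h : ZOrd l₁ l₂) : placeValue a l₁ < placeValue a l₂ := by
  obtain ⟨p, hp, hlt, hsame⟩ := exists_getD_lt_of_zOrd h h₂.2.1
  rw [placeValue_eq_sum_range h.length_le, placeValue]
  exact sum_range_lt_sum_range hk ha0 harec h₁.1 h₁.2.2 hp hlt hsame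

-- Greedy step: subtract the place value `a m ≤ n`; the remainder is below `a (m + 1 - k)`,
-- so its representation ends before position `m + 1 - k`.
lemma exists_isZeckendorf_placeValue_eq_of_lt (m : ℕ) : ∀ n : ℤ, 0 ≤ n → n < a m →
    ∃ l, IsZeckendorf k l ∧ l.length ≤ m ∧ placeValue a l = n := by
  induction m using Nat.strong_induction_on with
  | _ m ih =>
  intro n hn hnm
  rcases m with _ | m
  · rw [Nat.cast_zero, ha0 0 le_rfl] at hnm
    exact ⟨[], ⟨by simp, by simp, by simp [Separated]⟩, le_rfl, by simp [placeValue]; omega⟩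
  by_cases hlow : n < a m
  · obtain ⟨l, hl, hlen, hval⟩ := ih m (by omega) n hn hlow
    exact ⟨l, hl, by omega, hval⟩
  rw [a_natCast_succ ha0 harec] at hnm
  obtain ⟨l, hl, hlen, hval⟩ := ih (m + 1 - k) (by omega) (n - a m) (by omega) (by omega)
  refine ⟨l ++ List.replicate (m - l.length) 0 ++ [1],
    hl.append_replicate_one fun i hi => ?_, by simp; omega, ?_⟩
  · have := lt_length_of_getD_ne_zero (hi ▸ one_ne_zero)
    omega
  · rw [placeValue_append_replicate_one, hval, Nat.add_sub_cancel' (by omega)]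
    ring

lemma image_placeValue :
    placeValue a '' {l | l ≠ [] ∧ IsZeckendorf k l} = Set.Ici 1 := by
  have hnil : IsZeckendorf k [] := ⟨by simp, by simp, by simp [Separated]⟩
  ext n
  constructor
  · rintro ⟨l, ⟨hne, hl⟩, rfl⟩
    have := placeValue_lt_of_zOrd hk ha0 harec hnil hl (Or.inl (List.length_pos_iff.2 hne))
    rw [placeValue_nil] at this
    exact this
  · intro hn
    have h0 : 0 ≤ n := le_trans zero_le_one hn
    obtain ⟨l, hl, -, rfl⟩ := exists_isZeckendorf_placeValue_eq_of_lt hk ha0 harec n.toNat n h0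
      (by simpa [Int.toNat_of_nonneg h0] using natCast_lt_a hk ha0 harec n.toNat)
    refine ⟨l, ⟨?_, hl⟩, rfl⟩
    rintro rfl
    simp at hn

end Recurrence

section Weights

variable {k : ℕ} {lam : ℕ → ℕ} (hk : 1 < k) (hlam1 : lam 1 = 1)
  (hlam0 : ∀ i, i ≠ 1 → i ≠ k → lam i = 0)
include hk hlam1 hlam0

omit hk in
lemma Lam_eq_one {j : ℕ} (h1 : 1 ≤ j) (hj : j < k) : Lam lam j = 1 := by
  rw [Lam, sum_eq_single_of_mem 1 (mem_Icc.2 ⟨le_rfl, h1⟩)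
    fun i hi hi1 => hlam0 i hi1 (by rw [mem_Icc] at hi; omega), hlam1]

lemma Lam_self (hlamk : lam k = 1) : Lam lam k = 2 := by
  rw [Lam, sum_eq_add_of_mem 1 k (mem_Icc.2 ⟨le_rfl, hk.le⟩) (mem_Icc.2 ⟨hk.le, le_rfl⟩) hk.ne
    fun i _ hi => hlam0 i hi.1 hi.2, hlam1, hlamk]

lemma mu_zero_le_one : mu lam 0 ≤ 1 :=
  Nat.sInf_le (show 0 < Lam lam 1 by rw [Lam_eq_one hlam1 hlam0 le_rfl hk]; exact one_pos)

lemma mu_one (hlamk : lam k = 1) : mu lam 1 = k := by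
  have hLam : 1 < Lam lam k := by rw [Lam_self hk hlam1 hlam0 hlamk]; omega
  refine le_antisymm (Nat.sInf_le hLam) (le_csInf ⟨k, hLam⟩ fun j hj => ?_)
  by_contra hjk
  rcases Nat.eq_zero_or_pos j with rfl | hpos
  · simp [Lam] at hj
  · rw [Set.mem_ofPred_eq, Lam_eq_one hlam1 hlam0 hpos (by omega)] at hj
    exact lt_irrefl _ hj

lemma aValid_iff (hlamk : lam k = 1) (l : List ℕ) :
    AValid lam k l ↔ l ≠ [] ∧ IsZeckendorf k l := by
  have hmu0 := mu_zero_le_one hk hlam1 hlam0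
  have hmu1 := mu_one hk hlam1 hlam0 hlamk
  unfold AValid IsZeckendorf Separated
  rw [Lam_self hk hlam1 hlam0 hlamk]
  constructor
  · rintro ⟨hne, hdig, hlast, hgap⟩
    refine ⟨hne, fun x hx => Nat.lt_succ_iff.1 (hdig x hx), hlast, fun i j hij hi hj => ?_⟩
    by_contra hlt
    have := hgap i j hij (by rw [hi, hmu1]; omega) (lt_length_of_getD_ne_zero (by omega))
    omega
  · rintro ⟨hne, hbin, hlast, hsep⟩
    refine ⟨hne, fun x hx => Nat.lt_succ_of_le (hbin x hx), hlast, fun i j hij hj _ => ?_⟩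
    rcases Nat.le_one_iff_eq_zero_or_eq_one.1 (getD_le_one hbin i) with hi | hi
    · rw [hi] at hj
      omega
    · rw [hi, hmu1] at hj
      have := hsep i j hij hi
      have := getD_le_one hbin j
      omega

end Weights

end AZeckendorf

open AZeckendorf

/-- if `k > 1` and `Λ = 2` (so `λ₁ = λ_k = 1`, i.e. the
recurrence is `a_n = a_{n-1} + a_{n-k}`), then the `a`-Zeckendorf system is a
place value system with place values `a_0, a_1, …`: if `d_M, …, d_0` is the
`a`-Zeckendorf representation of `N` (the `N`-th valid sequence), then
`N = ∑ d_i a_i`, every digit is `0` or `1`, and any two `1`-digits are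
separated by at least `k - 1` zeroes. -/
theorem stmt15 (k : ℕ) (lam : ℕ → ℕ) (hk : 1 < k)
    (hlam1 : lam 1 = 1) (hlamk : lam k = 1)
    (hlam0 : ∀ i, i ≠ 1 → i ≠ k → lam i = 0)
    (a : ℤ → ℤ)
    (ha0 : ∀ i : ℤ, i ≤ 0 → a i = 1)
    (harec : ∀ n : ℤ, 1 ≤ n → a n = a (n - 1) + a (n - k)) :
    ∀ N : ℕ, 1 ≤ N → ∀ l : List ℕ, AValid lam k l →
      Set.ncard {l' : List ℕ | AValid lam k l' ∧ ZOrd l' l} = N - 1 →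
      ((N : ℤ) = ∑ i ∈ Finset.range l.length, (l.getD i 0 : ℤ) * a i) ∧
      (∀ x ∈ l, x ≤ 1) ∧
      (∀ i j : ℕ, i < j → j < l.length →
        l.getD i 0 = 1 → l.getD j 0 = 1 → i + k ≤ j) := by
  intro N hN l hl hcard
  have hvalid := aValid_iff hk hlam1 hlam0 hlamk
  have hZ := (hvalid l).1 hl
  have hrank := ncard_setOf_rel_eq zOrd_trichotomous
    (fun x hx y hy => placeValue_lt_of_zOrd (by omega) ha0 harec hx.2 hy.2)
    (image_placeValue (by omega) ha0 harec) hZ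
  simp only [Set.mem_ofPred_eq, ← hvalid, hcard] at hrank
  exact ⟨by unfold placeValue at hrank; omega, hZ.2.1, fun i j hij _ => hZ.2.2.2 i j hij⟩
end

section
/- For the Conolly recurrence C(n) = C(n − C(n−1)) + C(n − 1 − C(n−2)) with initial conditions C(1) = 1, C(2) = 2, the sequence C is slow (C(1) = 1 and C(n+1) − C(n) ∈ {0,1} for all n ≥ 1), and for every positive integer N, the number of indices n with C(n) = N equals ν₂(N) + 1, where ν₂(N) is the 2-adic valuation of N (the number of trailing zeroes in the binary representation of N). -/
private def fC : ℕ → ℕ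
  | 0 => 0
  | V + 1 => fC V + 1 + padicValNat 2 (V + 1)

private lemma fC_succ (V : ℕ) : fC (V + 1) = fC V + 1 + padicValNat 2 (V + 1) := rfl

private lemma fC_lt (V : ℕ) : fC V < fC (V + 1) := by
  rw [fC_succ]; omega

private lemma fC_mono : Monotone fC :=
  monotone_nat_of_le_succ fun n => (fC_lt n).le

private lemma le_fC (V : ℕ) : V ≤ fC V := by
  induction V with
  | zero => simp [fC]
  | succ n ih => have := fC_lt n; omega

private lemma nu_odd (w : ℕ) : padicValNat 2 (2 * w + 1) = 0 :=
  padicValNat.eq_zero_of_not_dvd (by omega)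

private lemma nu_two_mul (w : ℕ) (hw : 1 ≤ w) :
    padicValNat 2 (2 * w) = padicValNat 2 w + 1 := by
  haveI : Fact (Nat.Prime 2) := ⟨Nat.prime_two⟩
  rw [padicValNat.mul (by norm_num) (by omega), padicValNat.self (by norm_num)]
  omega

private lemma fC_eq_succ {V W : ℕ} (hW : W = V + 1) :
    fC W = fC V + 1 + padicValNat 2 W := by
  subst hW; exact fC_succ V

private lemma fC_two_mul (W : ℕ) : fC (2 * W) = fC W + 2 * W := by
  induction W with
  | zero => simp
  | succ w ih =>
    have h2 : fC (2 * w + 2) = fC (2 * w + 1) + 1 + padicValNat 2 (2 * w + 2) :=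
      fC_eq_succ rfl
    have h3 : fC (2 * w + 1) = fC (2 * w) + 1 + padicValNat 2 (2 * w + 1) :=
      fC_eq_succ rfl
    have h4 : padicValNat 2 (2 * (w + 1)) = padicValNat 2 (w + 1) + 1 :=
      nu_two_mul (w + 1) (by omega)
    have h5 : fC (w + 1) = fC w + 1 + padicValNat 2 (w + 1) := fC_succ _
    have h6 : 2 * (w + 1) = 2 * w + 2 := by omega
    rw [h6] at h4 ⊢
    have := nu_odd w
    omega

private lemma fC_odd (w : ℕ) : fC (2 * w + 1) = fC w + 2 * w + 1 := by
  have := fC_eq_succ (V := 2 * w) (W := 2 * w + 1) rfl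
  have := nu_odd w
  have := fC_two_mul w
  omega

private lemma fC_exists (n : ℕ) : ∃ V, n ≤ fC V := ⟨n, le_fC n⟩

private def D (n : ℕ) : ℕ := Nat.find (fC_exists n)

private lemma D_spec (n : ℕ) : n ≤ fC (D n) := Nat.find_spec (fC_exists n)

private lemma D_le (n : ℕ) : D n ≤ n := Nat.find_min' (fC_exists n) (le_fC n)

private lemma D_eq' {V W m : ℕ} (hW : W = V + 1) (h1 : fC V < m) (h2 : m ≤ fC W) :
    D m = W := by
  subst hW
  have hle : D m ≤ V + 1 := Nat.find_min' (fC_exists m) h2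
  rcases Nat.lt_or_ge (D m) (V + 1) with h | h
  · have := D_spec m
    have := fC_mono (show D m ≤ V by omega)
    omega
  · omega

private lemma fC_one : fC 1 = 1 := by
  have h := fC_eq_succ (V := 0) (W := 1) rfl
  have h0 : fC 0 = 0 := rfl
  have h1 : padicValNat 2 1 = 0 := padicValNat.one
  omega

private lemma fC_two : fC 2 = 3 := by
  haveI : Fact (Nat.Prime 2) := ⟨Nat.prime_two⟩
  have h := fC_eq_succ (V := 1) (W := 2) rfl
  rw [fC_one, padicValNat.self (by norm_num)] at h
  omega

private lemma D_pos {n : ℕ} (h : 1 ≤ n) : 1 ≤ D n := by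
  rcases Nat.eq_zero_or_pos (D n) with h0 | h0
  · have := D_spec n; rw [h0] at this; simp [fC] at this; omega
  · exact h0

private lemma D_lb {n : ℕ} (h : 1 ≤ n) : fC (D n - 1) < n := by
  have hp := D_pos h
  have := Nat.find_min (fC_exists n) (show D n - 1 < D n by omega)
  omega

private lemma D_one : D 1 = 1 :=
  D_eq' (V := 0) rfl (by simp [fC]) (by rw [fC_one])

private lemma D_two : D 2 = 2 :=
  D_eq' (V := 1) rfl (by rw [fC_one]; omega) (by rw [fC_two]; omega)

/-- The key identity: D satisfies the Conolly recurrence. -/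
private lemma star (n : ℕ) (hn : 3 ≤ n) :
    D (n - D (n - 1)) + D (n - 1 - D (n - 2)) = D n := by
  have hub := D_spec n
  have hlb := D_lb (show 1 ≤ n by omega)
  have hV2 : 2 ≤ D n := by
    rcases Nat.lt_or_ge (D n) 2 with h | h
    · have := fC_mono (show D n ≤ 1 by omega)
      have := fC_one
      omega
    · exact h
  rcases Nat.even_or_odd (D n) with he | ho
  · -- even case: D n = 2w + 2
    obtain ⟨w, hV⟩ : ∃ w, D n = 2 * w + 2 := by
      obtain ⟨k, hk⟩ := he; exact ⟨k - 1, by omega⟩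
    rw [hV] at hub hlb
    rw [show 2 * w + 2 - 1 = 2 * w + 1 from rfl] at hlb
    have e1 : fC (2 * w + 1) = fC w + 2 * w + 1 := fC_odd w
    have e2 : fC (2 * w + 2) = fC (w + 1) + 2 * w + 2 := by
      have := fC_two_mul (w + 1); rw [show 2 * (w + 1) = 2 * w + 2 by omega] at this; omega
    have e3 : fC (w + 1) = fC w + 1 + padicValNat 2 (w + 1) := fC_succ w
    have e4 : fC (w + 2) = fC (w + 1) + 1 + padicValNat 2 (w + 2) := fC_eq_succ rfl
    have e5 : fC (2 * w + 2) = fC (2 * w + 1) + 1 + padicValNat 2 (2 * w + 2) :=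
      fC_eq_succ rfl
    have e6 : 1 ≤ padicValNat 2 (2 * w + 2) := by
      have := nu_two_mul (w + 1) (by omega)
      rw [show 2 * (w + 1) = 2 * w + 2 by omega] at this; omega
    rcases Nat.lt_or_ge (fC (2 * w + 1) + 1) n with hB | hA
    · -- n ≥ fC(2w+1) + 2
      have hD1 : D (n - 1) = 2 * w + 2 := D_eq' rfl (by omega) (by omega)
      have hA1 : D (n - (2 * w + 2)) = w + 1 := D_eq' rfl (by omega) (by omega)
      rcases Nat.lt_or_ge (fC (2 * w + 1) + 2) n with hB2 | hB1
      · -- n ≥ fC(2w+1) + 3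
        have hD2 : D (n - 2) = 2 * w + 2 := D_eq' rfl (by omega) (by omega)
        have hA2 : D (n - 1 - (2 * w + 2)) = w + 1 := D_eq' rfl (by omega) (by omega)
        rw [hD1, hD2, hA1, hA2, hV]; omega
      · -- n = fC(2w+1) + 2
        have hn2 : n = fC (2 * w + 1) + 2 := by omega
        have e7 : fC (2 * w + 1) = fC (2 * w) + 1 := by
          have := fC_eq_succ (V := 2 * w) (W := 2 * w + 1) rfl
          have := nu_odd w
          omega
        have hD2 : D (n - 2) = 2 * w + 1 := D_eq' rfl (by omega) (by omega)
        have hA2 : D (n - 1 - (2 * w + 1)) = w + 1 := D_eq' rfl (by omega) (by omega)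
        rw [hD1, hD2, hA1, hA2, hV]; omega
    · -- n = fC(2w+1) + 1
      have hn1 : n = fC (2 * w + 1) + 1 := by omega
      have e7 : fC (2 * w + 1) = fC (2 * w) + 1 := by
        have := fC_eq_succ (V := 2 * w) (W := 2 * w + 1) rfl
        have := nu_odd w
        omega
      have hD1 : D (n - 1) = 2 * w + 1 := D_eq' rfl (by omega) (by omega)
      -- n ≥ 3 forces w ≥ 1
      have hw1 : 1 ≤ w := by
        rcases Nat.eq_zero_or_pos w with h0 | h0
        · exfalso; subst h0; rw [show 2 * 0 + 1 = 1 from rfl, fC_one] at hn1; omega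
        · exact h0
      have e8 : fC (2 * w) = fC (2 * w - 1) + 1 + padicValNat 2 (2 * w) :=
        fC_eq_succ (by omega)
      have hD2 : D (n - 2) = 2 * w := D_eq' (V := 2 * w - 1) (by omega) (by omega) (by omega)
      have hA1 : D (n - (2 * w + 1)) = w + 1 := D_eq' rfl (by omega) (by omega)
      have hA2 : D (n - 1 - (2 * w)) = w + 1 := D_eq' rfl (by omega) (by omega)
      rw [hD1, hD2, hA1, hA2, hV]; omega
  · -- odd case: D n = 2w + 3
    obtain ⟨w, hV⟩ : ∃ w, D n = 2 * w + 3 := by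
      obtain ⟨k, hk⟩ := ho; exact ⟨k - 1, by omega⟩
    rw [hV] at hub hlb
    rw [show 2 * w + 3 - 1 = 2 * w + 2 from rfl] at hlb
    have e0 : fC (2 * w + 3) = fC (2 * w + 2) + 1 + padicValNat 2 (2 * w + 3) :=
      fC_eq_succ rfl
    have e0' : padicValNat 2 (2 * w + 3) = 0 := by
      have := nu_odd (w + 1); rw [show 2 * (w + 1) + 1 = 2 * w + 3 by omega] at this; exact this
    have hn1 : n = fC (2 * w + 2) + 1 := by omega
    have e2 : fC (2 * w + 2) = fC (w + 1) + 2 * w + 2 := by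
      have := fC_two_mul (w + 1); rw [show 2 * (w + 1) = 2 * w + 2 by omega] at this; omega
    have e5 : fC (2 * w + 2) = fC (2 * w + 1) + 1 + padicValNat 2 (2 * w + 2) :=
      fC_eq_succ rfl
    have e6 : 1 ≤ padicValNat 2 (2 * w + 2) := by
      have := nu_two_mul (w + 1) (by omega)
      rw [show 2 * (w + 1) = 2 * w + 2 by omega] at this; omega
    have e3 : fC (w + 1) = fC w + 1 + padicValNat 2 (w + 1) := fC_succ w
    have e4 : fC (w + 2) = fC (w + 1) + 1 + padicValNat 2 (w + 2) := fC_eq_succ rfl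
    have hD1 : D (n - 1) = 2 * w + 2 := D_eq' rfl (by omega) (by omega)
    have hD2 : D (n - 2) = 2 * w + 2 := D_eq' rfl (by omega) (by omega)
    have hA1 : D (n - (2 * w + 2)) = w + 2 := D_eq' (V := w + 1) rfl (by omega) (by omega)
    have hA2 : D (n - 1 - (2 * w + 2)) = w + 1 := D_eq' (V := w) rfl (by omega) (by omega)
    rw [hD1, hD2, hA1, hA2, hV]; omega

private lemma C_eq_D (C : ℕ → ℕ) (h1 : C 1 = 1) (h2 : C 2 = 2)
    (hrec : ∀ n : ℕ, 3 ≤ n → C n = C (n - C (n - 1)) + C (n - 1 - C (n - 2))) :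
    ∀ n : ℕ, 1 ≤ n → C n = D n := by
  intro n
  induction n using Nat.strong_induction_on with
  | _ n ih =>
    intro hn
    rcases Nat.lt_or_ge n 3 with h3 | h3
    · interval_cases n
      · rw [h1, D_one]
      · rw [h2, D_two]
    · have e1 : C (n - 1) = D (n - 1) := ih (n - 1) (by omega) (by omega)
      have e2 : C (n - 2) = D (n - 2) := ih (n - 2) (by omega) (by omega)
      have b1 : D (n - 1) ≤ n - 1 := D_le (n - 1)
      have b1' : 1 ≤ D (n - 1) := D_pos (by omega)
      have b2 : D (n - 2) ≤ n - 2 := D_le (n - 2)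
      rw [hrec n h3, e1, e2,
        ih (n - D (n - 1)) (by omega) (by omega),
        ih (n - 1 - D (n - 2)) (by omega) (by omega)]
      exact star n h3

private lemma D_slow (n : ℕ) (h : 1 ≤ n) : D (n + 1) = D n ∨ D (n + 1) = D n + 1 := by
  have hub := D_spec n
  have hlb := D_lb h
  have hp := D_pos h
  rcases Nat.lt_or_ge (fC (D n)) (n + 1) with h2 | h2
  · right
    exact D_eq' rfl h2 (by have := fC_lt (D n); omega)
  · left
    exact D_eq' (V := D n - 1) (by omega) (by omega) (by omega)

/-- the Conolly sequence, defined by `C(1) = 1`, `C(2) = 2` and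
`C(n) = C(n - C(n-1)) + C(n - 1 - C(n-2))` for `n ≥ 3`, is slow (`C(1) = 1`
and successive differences are `0` or `1`), and every positive integer `N`
occurs exactly `ν₂(N) + 1` times, where `ν₂(N)` is the 2-adic valuation of
`N`. -/
theorem stmt19 (C : ℕ → ℕ) (h1 : C 1 = 1) (h2 : C 2 = 2)
    (hrec : ∀ n : ℕ, 3 ≤ n → C n = C (n - C (n - 1)) + C (n - 1 - C (n - 2))) :
    (∀ n : ℕ, 1 ≤ n → C (n + 1) = C n ∨ C (n + 1) = C n + 1) ∧
    ∀ N : ℕ, 1 ≤ N →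
      Set.ncard {n : ℕ | 1 ≤ n ∧ C n = N} = padicValNat 2 N + 1 := by
  have hCD := C_eq_D C h1 h2 hrec
  constructor
  · intro n hn
    rw [hCD n hn, hCD (n + 1) (by omega)]
    exact D_slow n hn
  · intro N hN
    obtain ⟨M, rfl⟩ : ∃ M, N = M + 1 := ⟨N - 1, by omega⟩
    have hset : {n : ℕ | 1 ≤ n ∧ C n = M + 1} = Set.Icc (fC M + 1) (fC (M + 1)) := by
      ext n
      simp only [Set.mem_setOf_eq, Set.mem_Icc]
      constructor
      · rintro ⟨hn1, hCn⟩
        rw [hCD n hn1] at hCn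
        have hub := D_spec n
        have hlb := D_lb hn1
        rw [hCn] at hub hlb
        rw [show M + 1 - 1 = M from rfl] at hlb
        omega
      · rintro ⟨ha, hb⟩
        have hn1 : 1 ≤ n := by have := le_fC M; omega
        have : D n = M + 1 := D_eq' rfl (by omega) hb
        exact ⟨hn1, by rw [hCD n hn1, this]⟩
    rw [hset, show Set.Icc (fC M + 1) (fC (M + 1)) = ↑(Finset.Icc (fC M + 1) (fC (M + 1))) from
      (Finset.coe_Icc _ _).symm, Set.ncard_coe_finset, Nat.card_Icc]
    have := fC_succ M
    omega
end
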